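/- arXiv:1311.2985 — 12 statements merged into one kernel-verified Lean document; each statement's English description precedes it below -/
import Mathlib

section
/- Let Γ be a finite abelian group of order n, let g ≥ h ≥ 2 be integers, and let A ⊆ Γ be a C_h[g]-set. Then the function M : Γ × Γ → {0,1} defined by M(x,y) = 1 if and only if x + y ∈ A satisfies: (i) the total number of pairs (x,y) with M(x,y) = 1 equals n·|A|; and (ii) there do not exist a set S ⊆ Γ with |S| = g and a set T ⊆ Γ with |T| = h such that M(x,y) = 1 for all x ∈ S and y ∈ T. In particular n·|A| ≤ z(n,n,g,h), where z(n,n,g,h) denotes the maximum number of 1's in an n × n 0-1 matrix containing no g × h all-ones submatrix. -/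
/-- `A ⊆ Γ` is a `C_h[g]`-set: for every set `X ⊆ Γ` with `|X| = h` and every set
`K ⊆ Γ` of `g` (distinct) elements, at least one translate `X + k` (`k ∈ K`) is not
contained in `A`. -/
def IsChSet {Γ : Type*} [AddCommGroup Γ] (h g : ℕ) (A : Set Γ) : Prop :=
  ∀ X : Finset Γ, X.card = h → ∀ K : Finset Γ, K.card = g →
    ∃ k ∈ K, ¬ (∀ x ∈ X, x + k ∈ A)

/-- `z(m,n,s,t)`: the maximum number of `1`'s in an `m × n` 0-1 matrix with no
`s × t` all-ones submatrix. -/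
noncomputable def zarankiewicz (m n s t : ℕ) : ℕ :=
  sSup { N : ℕ | ∃ M : Fin m → Fin n → Bool,
    N = (Finset.univ.filter fun p : Fin m × Fin n => M p.1 p.2 = true).card ∧
    ∀ S : Finset (Fin m), S.card = s → ∀ T : Finset (Fin n), T.card = t →
      ¬ (∀ i ∈ S, ∀ j ∈ T, M i j = true) }

theorem stmt0 {Γ : Type*} [AddCommGroup Γ] [Fintype Γ] [DecidableEq Γ]
    (g h : ℕ) (hh : 2 ≤ h) (hgh : h ≤ g) (n : ℕ) (hn : n = Fintype.card Γ)
    (A : Finset Γ) (hA : IsChSet h g (A : Set Γ)) :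
    (Finset.univ.filter fun p : Γ × Γ => p.1 + p.2 ∈ A).card = n * A.card ∧
    (¬ ∃ S T : Finset Γ, S.card = g ∧ T.card = h ∧ ∀ x ∈ S, ∀ y ∈ T, x + y ∈ A) ∧
    n * A.card ≤ zarankiewicz n n g h := by
  have h1 : (Finset.univ.filter fun p : Γ × Γ => p.1 + p.2 ∈ A).card = n * A.card := by
    rw [hn, ← Finset.card_univ, ← Finset.card_product]
    apply Finset.card_bij (fun p _ => (p.1, p.1 + p.2))
    · intro p hp
      simp only [Finset.mem_filter] at hp
      simp [hp.2]
    · intro p hp q hq hpq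
      simp only [Prod.mk.injEq] at hpq
      obtain ⟨h1, h2⟩ := hpq
      rw [h1] at h2
      exact Prod.ext h1 (by exact add_left_cancel h2)
    · intro b hb
      simp only [Finset.mem_product, Finset.mem_univ, true_and] at hb
      exact ⟨(b.1, b.2 - b.1), by simp [hb], by simp⟩
  have h2 : ¬ ∃ S T : Finset Γ, S.card = g ∧ T.card = h ∧ ∀ x ∈ S, ∀ y ∈ T, x + y ∈ A := by
    rintro ⟨S, T, hS, hT, hST⟩
    obtain ⟨k, hk, hk2⟩ := hA T hT S hS
    exact hk2 fun x hx => by have := hST k hk x hx; rwa [add_comm] at this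
  refine ⟨h1, h2, ?_⟩
  have e : Γ ≃ Fin n := Fintype.equivFinOfCardEq hn.symm
  set M : Fin n → Fin n → Bool := fun i j => decide (e.symm i + e.symm j ∈ A) with hM
  have hcard : (Finset.univ.filter fun p : Fin n × Fin n => M p.1 p.2 = true).card
      = n * A.card := by
    rw [← h1]
    apply Finset.card_bij (fun p _ => (e.symm p.1, e.symm p.2))
    · intro p hp
      simp only [Finset.mem_filter, hM, decide_eq_true_eq] at hp
      simp [hp.2]
    · intro p hp q hq hpq
      simp only [Prod.mk.injEq, EmbeddingLike.apply_eq_iff_eq] at hpq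
      exact Prod.ext hpq.1 hpq.2
    · intro b hb
      simp only [Finset.mem_filter] at hb
      exact ⟨(e b.1, e b.2), by simp [hM, hb.2], by simp⟩
  have hmem : n * A.card ∈ { N : ℕ | ∃ M : Fin n → Fin n → Bool,
      N = (Finset.univ.filter fun p : Fin n × Fin n => M p.1 p.2 = true).card ∧
      ∀ S : Finset (Fin n), S.card = g → ∀ T : Finset (Fin n), T.card = h →
        ¬ (∀ i ∈ S, ∀ j ∈ T, M i j = true) } := by
    refine ⟨M, hcard.symm, ?_⟩
    intro S hS T hT hall
    apply h2
    refine ⟨S.image e.symm, T.image e.symm, ?_, ?_, ?_⟩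
    · rw [Finset.card_image_of_injective _ e.symm.injective, hS]
    · rw [Finset.card_image_of_injective _ e.symm.injective, hT]
    · intro x hx y hy
      simp only [Finset.mem_image] at hx hy
      obtain ⟨i, hi, rfl⟩ := hx
      obtain ⟨j, hj, rfl⟩ := hy
      have := hall i hi j hj
      simpa [hM] using this
  apply le_csSup _ hmem
  refine ⟨n * n, fun N hN => ?_⟩
  obtain ⟨M', hM', _⟩ := hN
  calc N ≤ (Finset.univ : Finset (Fin n × Fin n)).card := hM' ▸ Finset.card_filter_le _ _
    _ = n * n := by simp
end

section
/- Let g ≥ h ≥ 2 be integers. If A ⊆ [n] is a C_h[g]-set in ℤ (with the C_h[g] condition taken over subsets of ℤ), then A is a C_h[g]-set in the cyclic group ℤ/2nℤ, meaning that the image of A under the natural map [n] → ℤ/2nℤ is a C_h[g]-set in ℤ/2nℤ. -/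
theorem stmt1 (g h n : ℕ) (hh : 2 ≤ h) (hgh : h ≤ g) (A : Set ℤ)
    (hAn : A ⊆ Set.Icc 1 (n : ℤ)) (hA : IsChSet h g A) :
    IsChSet h g ((fun x : ℤ => (x : ZMod (2 * n))) '' A) := by
  classical
  intro X hX K hK
  by_contra hcon
  push_neg at hcon
  have hXne : X.Nonempty := Finset.card_pos.mp (by omega)
  have hKne : K.Nonempty := Finset.card_pos.mp (by omega)
  obtain ⟨x₀, hx₀⟩ := hXne
  obtain ⟨k₀, hk₀⟩ := hKne
  rcases Nat.eq_zero_or_pos n with hn | hn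
  · subst hn
    obtain ⟨a, ha, -⟩ := hcon k₀ hk₀ x₀ hx₀
    have := hAn ha
    simp at this
  -- section s of the cast map
  set s : ZMod (2*n) → ℤ := fun z =>
    if hz : ∃ a ∈ A, ((a : ℤ) : ZMod (2*n)) = z then hz.choose else 0 with hs
  have hsA : ∀ k ∈ K, ∀ x ∈ X, s (x + k) ∈ A ∧ ((s (x+k) : ℤ) : ZMod (2*n)) = x + k := by
    intro k hk x hx
    obtain ⟨a, ha, hae⟩ := hcon k hk x hx
    have hz : ∃ a ∈ A, ((a:ℤ):ZMod (2*n)) = x + k := ⟨a, ha, hae⟩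
    simp only [hs, dif_pos hz]
    exact ⟨hz.choose_spec.1, hz.choose_spec.2⟩
  have hbound : ∀ k ∈ K, ∀ x ∈ X, 1 ≤ s (x+k) ∧ s (x+k) ≤ n := by
    intro k hk x hx
    exact hAn (hsA k hk x hx).1
  have hinj : ∀ a b : ℤ, ((a : ZMod (2*n)) = (b : ZMod (2*n))) → |a - b| < 2*n → a = b := by
    intro a b hab habs
    have hd : ((2*n : ℕ) : ℤ) ∣ (b - a) := ((ZMod.intCast_eq_intCast_iff a b (2*n)).mp hab).dvd
    have := Int.eq_zero_of_abs_lt_dvd hd (by rw [abs_sub_comm]; exact_mod_cast habs)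
    omega
  set d : ZMod (2*n) → ℤ := fun k => s (x₀ + k) - s (x₀ + k₀) with hd
  have hdbound : ∀ k ∈ K, 1 - n ≤ d k ∧ d k ≤ n - 1 := by
    intro k hk
    have h1 := hbound k hk x₀ hx₀
    have h2 := hbound k₀ hk₀ x₀ hx₀
    constructor <;> simp only [hd] <;> omega
  have key : ∀ k ∈ K, ∀ x ∈ X, s (x + k) = s (x + k₀) + d k := by
    intro k hk x hx
    apply hinj
    · simp only [hd]
      push_cast
      rw [(hsA k hk x hx).2, (hsA k₀ hk₀ x hx).2, (hsA k hk x₀ hx₀).2,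
        (hsA k₀ hk₀ x₀ hx₀).2]
      ring
    · have h1 := hbound k hk x hx
      have h2 := hbound k₀ hk₀ x hx
      have h3 := hdbound k hk
      rw [abs_lt]
      omega
  set X' : Finset ℤ := X.image (fun x => s (x + k₀)) with hX'
  set K' : Finset ℤ := K.image d with hK'
  have hX'c : X'.card = h := by
    rw [hX', Finset.card_image_of_injOn, hX]
    intro x hx y hy hxy
    dsimp only at hxy
    have hx' := Finset.mem_coe.mp hx
    have hy' := Finset.mem_coe.mp hy
    have : (x : ZMod (2*n)) + k₀ = y + k₀ := by
      rw [← (hsA k₀ hk₀ x hx').2, ← (hsA k₀ hk₀ y hy').2, hxy]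
    exact add_right_cancel this
  have hK'c : K'.card = g := by
    rw [hK', Finset.card_image_of_injOn, hK]
    intro k hk k' hk' hkk
    simp only [hd] at hkk
    have hk1 := Finset.mem_coe.mp hk
    have hk2 := Finset.mem_coe.mp hk'
    have hss : s (x₀ + k) = s (x₀ + k') := by omega
    have : (x₀ : ZMod (2*n)) + k = x₀ + k' := by
      rw [← (hsA k hk1 x₀ hx₀).2, ← (hsA k' hk2 x₀ hx₀).2, hss]
    exact add_left_cancel this
  obtain ⟨k', hk'K', hfail⟩ := hA X' hX'c K' hK'c
  apply hfail
  intro x' hx'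
  obtain ⟨x, hx, rfl⟩ := Finset.mem_image.mp hx'
  obtain ⟨k, hk, rfl⟩ := Finset.mem_image.mp hk'K'
  rw [← key k hk x hx]
  exact (hsA k hk x hx).1
end

section
/- There is a constant C = C(g,h) > 0, depending only on the integers g ≥ h ≥ 2, such that for every positive integer n and every C_h[g]-set A ⊆ [n] (with the C_h[g] condition taken in the group ℤ), one has |A| ≤ (g-1)^{1/h} · n^{1 - 1/h} + C · n^{1/2 - 1/(2h)}. -/
open Finset

theorem IsChSet.card_filter_forall_add_mem_le {Γ : Type*} [AddCommGroup Γ] [DecidableEq Γ]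
    {h g : ℕ} {A : Finset Γ} (hA : IsChSet h g (A : Set Γ)) {X : Finset Γ} (hX : #X = h)
    (S : Finset Γ) : #{k ∈ S | ∀ x ∈ X, x + k ∈ A} ≤ g - 1 := by
  by_contra! hlt
  obtain ⟨K, hKS, hK⟩ := exists_subset_card_eq (show g ≤ #{k ∈ S | ∀ x ∈ X, x + k ∈ A} by omega)
  obtain ⟨k, hk, hkA⟩ := hA X hX K hK
  exact hkA (mem_filter.1 (hKS hk)).2

theorem card_powersetCard_inter_map_addRightEmbedding {Γ : Type*} [Add Γ] [IsRightCancelAdd Γ]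
    [DecidableEq Γ] (h : ℕ) (A S : Finset Γ) (t : Γ) :
    #(powersetCard h (A ∩ S.map (addRightEmbedding t))) =
      #{Z ∈ powersetCard h S | ∀ x ∈ Z, x + t ∈ A} := by
  have hinter : A ∩ S.map (addRightEmbedding t) =
      {x ∈ S | x + t ∈ A}.map (addRightEmbedding t) := by
    ext y
    simp only [mem_inter, mem_map, mem_filter, addRightEmbedding_apply]
    grind
  have hpowerset : powersetCard h {x ∈ S | x + t ∈ A} =
      {Z ∈ powersetCard h S | ∀ x ∈ Z, x + t ∈ A} := by
    ext Z
    simp only [mem_powersetCard, mem_filter, subset_iff]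
    grind
  rw [hinter, powersetCard_map, card_map, hpowerset]

theorem IsChSet.sum_choose_card_inter_Ioc_le {h g : ℕ} {A : Finset ℤ}
    (hA : IsChSet h g (A : Set ℤ)) (u : ℕ) (T : Finset ℤ) :
    ∑ t ∈ T, (#(A ∩ Ioc t (t + u))).choose h ≤ (g - 1) * u.choose h :=
  calc ∑ t ∈ T, (#(A ∩ Ioc t (t + u))).choose h
      = ∑ t ∈ T, #{Z ∈ powersetCard h (Ioc 0 (u : ℤ)) | ∀ x ∈ Z, x + t ∈ A} := by
        refine sum_congr rfl fun t _ => ?_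
        rw [← card_powersetCard, add_comm t, ← card_powersetCard_inter_map_addRightEmbedding,
          map_add_right_Ioc, zero_add]
    _ = ∑ Z ∈ powersetCard h (Ioc 0 (u : ℤ)), #{t ∈ T | ∀ x ∈ Z, x + t ∈ A} := by
        simp only [card_filter]
        exact sum_comm
    _ ≤ ∑ Z ∈ powersetCard h (Ioc 0 (u : ℤ)), (g - 1) :=
        sum_le_sum fun Z hZ => hA.card_filter_forall_add_mem_le (mem_powersetCard.1 hZ).2 T
    _ = (g - 1) * u.choose h := by simp [card_powersetCard, mul_comm]

theorem sum_card_inter_Ioc_eq {A : Finset ℤ} {n : ℕ} (hA : (A : Set ℤ) ⊆ Set.Icc 1 n) (u : ℕ) :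
    ∑ t ∈ Ico (-(u : ℤ)) (n : ℤ), #(A ∩ Ioc t (t + u)) = #A * u := by
  have hcover : ∀ a ∈ A, #{t ∈ Ico (-(u : ℤ)) (n : ℤ) | a ∈ Ioc t (t + (u : ℤ))} = u := by
    intro a ha
    have ha' := hA ha
    rw [Set.mem_Icc] at ha'
    have : {t ∈ Ico (-(u : ℤ)) (n : ℤ) | a ∈ Ioc t (t + (u : ℤ))} = Ico (a - u) a := by
      ext t
      simp only [mem_filter, mem_Ico, mem_Ioc]
      omega
    rw [this, Int.card_Ico]
    omega
  simp_rw [← filter_mem_eq_inter]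
  rw [← sum_const_nat hcover]
  exact sum_card_bipartiteAbove_eq_sum_card_bipartiteBelow (r := fun (t a : ℤ) => a ∈ Ioc t (t + u))

theorem sum_le_of_sum_choose_le {ι : Type*} (s : Finset ι) (c : ι → ℕ) {h K u : ℕ} (hh : 1 ≤ h)
    (H : ∑ i ∈ s, (c i).choose h ≤ K * u.choose h) :
    (∑ i ∈ s, c i : ℝ) ≤
      (h - 1) * #s + (K : ℝ) ^ ((1 : ℝ) / h) * (#s : ℝ) ^ (1 - (1 : ℝ) / h) * u := by
  set x : ι → ℝ := fun i => ((c i + 1 - h : ℕ) : ℝ)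
  have hx : ∀ i ∈ s, 0 ≤ x i := fun i _ => Nat.cast_nonneg _
  have hpow : ∑ i ∈ s, x i ^ h ≤ K * u ^ h := by
    have : ∑ i ∈ s, (c i + 1 - h) ^ h ≤ K * u ^ h :=
      calc ∑ i ∈ s, (c i + 1 - h) ^ h ≤ ∑ i ∈ s, h.factorial * (c i).choose h := by
            gcongr with i
            rw [← Nat.descFactorial_eq_factorial_mul_choose]
            exact Nat.pow_sub_le_descFactorial _ _
        _ = h.factorial * ∑ i ∈ s, (c i).choose h := (mul_sum ..).symm
        _ ≤ h.factorial * (K * u.choose h) := Nat.mul_le_mul_left _ H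
        _ = K * u.descFactorial h := by rw [Nat.descFactorial_eq_factorial_mul_choose]; ring
        _ ≤ K * u ^ h := Nat.mul_le_mul_left _ (u.descFactorial_le_pow h)
    simp only [x]
    exact_mod_cast this
  have hsum : ∑ i ∈ s, x i ≤ (K : ℝ) ^ ((1 : ℝ) / h) * (#s : ℝ) ^ (1 - (1 : ℝ) / h) * u := by
    have hjensen : (∑ i ∈ s, x i) ^ h ≤ (#s : ℝ) ^ (h - 1) * (K * u ^ h) := by
      have := pow_sum_le_card_mul_sum_pow hx (h - 1)
      rw [Nat.sub_add_cancel hh] at this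
      exact this.trans (by gcongr)
    have hroot : ((K : ℝ) ^ ((1 : ℝ) / h) * (#s : ℝ) ^ (1 - (1 : ℝ) / h) * u) ^ h =
        (#s : ℝ) ^ (h - 1) * (K * u ^ h) := by
      have hexp : (1 - (1 : ℝ) / h) * h = ((h - 1 : ℕ) : ℝ) := by
        rw [Nat.cast_sub hh]
        field_simp
        norm_num
      rw [mul_pow, mul_pow, one_div, Real.rpow_inv_natCast_pow (Nat.cast_nonneg _) (by omega),
        ← Real.rpow_natCast ((#s : ℝ) ^ _), ← Real.rpow_mul (Nat.cast_nonneg _), ← one_div, hexp,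
        Real.rpow_natCast]
      ring
    exact le_of_pow_le_pow_left₀ (by omega) (by positivity) (hroot ▸ hjensen)
  have hc : ∀ i ∈ s, (c i : ℝ) ≤ x i + (h - 1) := fun i _ => by
    have : (c i : ℝ) + 1 ≤ x i + h := by
      simp only [x]
      exact_mod_cast (le_tsub_add : c i + 1 ≤ c i + 1 - h + h)
    linarith
  calc (∑ i ∈ s, c i : ℝ) ≤ ∑ i ∈ s, (x i + (h - 1)) := sum_le_sum hc
    _ = ∑ i ∈ s, x i + (h - 1) * #s := by rw [sum_add_distrib, sum_const, nsmul_eq_mul, mul_comm]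
    _ ≤ _ := by linarith

theorem IsChSet.card_mul_le {g h n : ℕ} (hh : 1 ≤ h) (hg : 1 ≤ g) {A : Finset ℤ}
    (hAn : (A : Set ℤ) ⊆ Set.Icc 1 n) (hA : IsChSet h g (A : Set ℤ)) (u : ℕ) :
    (#A * u : ℝ) ≤ (h - 1) * (n + u) +
      ((g : ℝ) - 1) ^ ((1 : ℝ) / h) * ((n : ℝ) + u) ^ (1 - (1 : ℝ) / h) * u := by
  have key := sum_le_of_sum_choose_le (Ico (-(u : ℤ)) n) (fun t => #(A ∩ Ioc t (t + u))) hh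
    (hA.sum_choose_card_inter_Ioc_le u _)
  have hwindows : #(Ico (-(u : ℤ)) n) = n + u := by
    rw [Int.card_Ico]
    omega
  rw [← Nat.cast_sum, sum_card_inter_Ioc_eq hAn, hwindows, Nat.cast_sub hg] at key
  exact_mod_cast key

theorem rpow_add_le_rpow_add_mul_rpow_sub_one {x y α : ℝ} (hx : 0 < x) (hy : 0 ≤ y)
    (hα0 : 0 ≤ α) (hα1 : α ≤ 1) : (x + y) ^ α ≤ x ^ α + α * y * x ^ (α - 1) := by
  have hyx : 0 ≤ y / x := div_nonneg hy hx.le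
  calc (x + y) ^ α = x ^ α * (1 + y / x) ^ α := by
        rw [← Real.mul_rpow hx.le (by positivity), mul_add, mul_one, mul_div_cancel₀ _ hx.ne']
    _ ≤ x ^ α * (1 + α * (y / x)) := by
        gcongr
        exact rpow_one_add_le_one_add_mul_self (by linarith) hα0 hα1
    _ = x ^ α + α * y * x ^ (α - 1) := by
        rw [Real.rpow_sub hx, Real.rpow_one]
        field_simp

theorem le_add_mul_rpow_of_mul_le {a G n u : ℝ} {h : ℕ} (hh : 1 ≤ h) (hG : 0 ≤ G) (hn : 1 ≤ n)
    (hu : n ^ ((1 : ℝ) / 2 + 1 / (2 * h)) ≤ u) (hu' : u ≤ 2 * n ^ ((1 : ℝ) / 2 + 1 / (2 * h)))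
    (H : a * u ≤ (h - 1) * (n + u) + G * (n + u) ^ (1 - (1 : ℝ) / h) * u) :
    a ≤ G * n ^ (1 - (1 : ℝ) / h) + 2 * (h - 1 + G) * n ^ ((1 : ℝ) / 2 - 1 / (2 * h)) := by
  set p : ℝ := 1 / 2 + 1 / (2 * h)
  set e : ℝ := 1 / 2 - 1 / (2 * h)
  set α : ℝ := 1 - 1 / h
  have hh' : (1 : ℝ) ≤ h := by exact_mod_cast hh
  have hinv : 1 / (h : ℝ) ≤ 1 := by rw [div_le_one (by positivity)]; exact hh'
  have hα0 : 0 ≤ α := by simp only [α]; linarith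
  have hα1 : α ≤ 1 := by simp only [α]; linarith [show 0 ≤ 1 / (h : ℝ) by positivity]
  have he : 0 ≤ e := by
    have : 1 / (2 * (h : ℝ)) ≤ 1 / 2 := one_div_le_one_div_of_le two_pos (by linarith)
    simp only [e]
    linarith
  have hn0 : 0 < n := by linarith
  have hu0 : 0 < u := lt_of_lt_of_le (by positivity) hu
  have hne : 1 ≤ n ^ e := Real.one_le_rpow hn he
  have hn_le : n ≤ u * n ^ e :=
    calc n = n ^ p * n ^ e := by
          rw [← Real.rpow_add hn0, show p + e = 1 by ring, Real.rpow_one]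
      _ ≤ u * n ^ e := by gcongr
  have htangent : α * u * n ^ (α - 1) ≤ 2 * n ^ e :=
    calc α * u * n ^ (α - 1) ≤ 1 * (2 * n ^ p) * n ^ (α - 1) := by gcongr
      _ = 2 * n ^ e := by
          rw [one_mul, mul_assoc, ← Real.rpow_add hn0]
          congr 2
          simp only [p, e, α]
          ring
  have hconcave := rpow_add_le_rpow_add_mul_rpow_sub_one hn0 hu0.le hα0 hα1
  refine le_of_mul_le_mul_right (H.trans ?_) hu0
  calc (h - 1) * (n + u) + G * (n + u) ^ α * u
      ≤ (h - 1) * (u * n ^ e + u * n ^ e) + G * (n ^ α + 2 * n ^ e) * u := by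
        gcongr
        · exact le_mul_of_one_le_right hu0.le hne
        · linarith
    _ = (G * n ^ α + 2 * (h - 1 + G) * n ^ e) * u := by ring

theorem stmt2 (g h : ℕ) (hh : 2 ≤ h) (hgh : h ≤ g) :
    ∃ C : ℝ, 0 < C ∧ ∀ n : ℕ, 0 < n → ∀ A : Finset ℤ,
      (A : Set ℤ) ⊆ Set.Icc 1 (n : ℤ) → IsChSet h g (A : Set ℤ) →
      (A.card : ℝ) ≤ ((g : ℝ) - 1) ^ ((1 : ℝ) / h) * (n : ℝ) ^ (1 - (1 : ℝ) / h)
        + C * (n : ℝ) ^ ((1 : ℝ) / 2 - 1 / (2 * h)) := by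
  have hhR : (2 : ℝ) ≤ h := by exact_mod_cast hh
  have hG : 0 ≤ ((g : ℝ) - 1) ^ ((1 : ℝ) / h) := by
    have : (2 : ℝ) ≤ g := by exact_mod_cast hh.trans hgh
    exact Real.rpow_nonneg (by linarith) _
  refine ⟨2 * (h - 1 + ((g : ℝ) - 1) ^ ((1 : ℝ) / h)), by linarith, fun n hn A hAn hA => ?_⟩
  have hn1 : (1 : ℝ) ≤ n := by exact_mod_cast hn
  set u := ⌈(n : ℝ) ^ ((1 : ℝ) / 2 + 1 / (2 * h))⌉₊
  have hu : (u : ℝ) ≤ 2 * (n : ℝ) ^ ((1 : ℝ) / 2 + 1 / (2 * h)) := by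
    have := Real.one_le_rpow hn1 (show (0 : ℝ) ≤ 1 / 2 + 1 / (2 * h) by positivity)
    linarith [Nat.ceil_lt_add_one (zero_le_one.trans this)]
  exact le_add_mul_rpow_of_mul_le (by omega) hG hn1 (Nat.le_ceil _) hu
    (hA.card_mul_le (by omega) (by omega) hAn u)
end

section
/- Let g ≥ h ≥ 2 be integers, let A ⊆ [n] be a C_h[g]-set in ℤ, and let B ⊆ [n] be any finite set with |B| ≥ h. Then |A|^{h/(h-1)} ≤ |A + B| · ( (g-1)^{1/(h-1)} + (h-1)·|A|^{1/(h-1)} / |B| ), where A + B = {a + b : a ∈ A, b ∈ B} is the sumset. -/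
open Pointwise

/-!
Let `r(s)` be the number of `b ∈ B` with `s - b ∈ A`, for `s ∈ A + B`; then `∑ r(s) = |A||B|`.
For an `h`-subset `Y ⊆ B`, the sums `s` whose representations contain `Y` are those with
`-Y + s ⊆ A`, and the `C_h[g]` property allows fewer than `g` of them. Double counting gives
`∑ C(r(s), h) ≤ (g - 1) C(|B|, h)`, hence `∑ r(s) (r(s) - h + 1)₊^(h-1) ≤ (g - 1) |B|^h`.
Jensen's inequality for the convex function `x (x - h + 1)₊^(h-1)` at the mean `|A||B| / |A + B|`,
followed by taking `(h-1)`-th roots, yields the bound.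
-/

open Finset

section Representations

variable {Γ : Type*} [AddCommGroup Γ] [DecidableEq Γ]

def reprCount (A B : Finset Γ) (s : Γ) : ℕ := #{b ∈ B | s - b ∈ A}

theorem card_filter_sub_mem_add (A B : Finset Γ) {b : Γ} (hb : b ∈ B) :
    #{s ∈ A + B | s - b ∈ A} = #A := by
  refine card_nbij' (· - b) (· + b) (fun s hs => (mem_filter.1 hs).2)
    (fun a ha => mem_filter.2 ⟨add_mem_add ha hb, by simpa using ha⟩)
    (fun s _ => sub_add_cancel s b) (fun a _ => add_sub_cancel_right a b)

theorem sum_reprCount_add (A B : Finset Γ) : ∑ s ∈ A + B, reprCount A B s = #A * #B := by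
  calc ∑ s ∈ A + B, reprCount A B s
      = ∑ b ∈ B, #{s ∈ A + B | s - b ∈ A} :=
        sum_card_bipartiteAbove_eq_sum_card_bipartiteBelow (fun s b => s - b ∈ A)
    _ = #A * #B := by
        rw [sum_congr rfl fun b hb => card_filter_sub_mem_add A B hb, sum_const, smul_eq_mul,
          mul_comm]

theorem choose_reprCount (A B : Finset Γ) (s : Γ) (h : ℕ) :
    (reprCount A B s).choose h = #{Y ∈ B.powersetCard h | ∀ b ∈ Y, s - b ∈ A} := by
  rw [reprCount, ← card_powersetCard]
  congr 1
  ext Y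
  simp only [mem_powersetCard, mem_filter, subset_iff]
  grind

theorem IsChSet.card_filter_sub_mem_le {g h : ℕ} {A : Finset Γ} (hA : IsChSet h g (A : Set Γ))
    {Y : Finset Γ} (hY : #Y = h) (S : Finset Γ) : #{s ∈ S | ∀ b ∈ Y, s - b ∈ A} ≤ g - 1 := by
  by_contra! hlt
  obtain ⟨K, hKS, hK⟩ := exists_subset_card_eq (show g ≤ #{s ∈ S | ∀ b ∈ Y, s - b ∈ A} by omega)
  obtain ⟨k, hk, hnot⟩ := hA (Y.image Neg.neg) (by rw [card_image_of_injective _ neg_injective, hY])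
    K hK
  refine hnot fun x hx => ?_
  obtain ⟨b, hb, rfl⟩ := mem_image.1 hx
  simpa [neg_add_eq_sub] using (mem_filter.1 (hKS hk)).2 b hb

theorem IsChSet.sum_choose_reprCount_le {g h : ℕ} {A : Finset Γ} (hA : IsChSet h g (A : Set Γ))
    (B S : Finset Γ) : ∑ s ∈ S, (reprCount A B s).choose h ≤ (g - 1) * (#B).choose h := by
  calc ∑ s ∈ S, (reprCount A B s).choose h
      = ∑ Y ∈ B.powersetCard h, #{s ∈ S | ∀ b ∈ Y, s - b ∈ A} := by
        simp_rw [choose_reprCount]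
        exact sum_card_bipartiteAbove_eq_sum_card_bipartiteBelow (fun s Y => ∀ b ∈ Y, s - b ∈ A)
    _ ≤ ∑ _Y ∈ B.powersetCard h, (g - 1) :=
        sum_le_sum fun Y hY => hA.card_filter_sub_mem_le (mem_powersetCard.1 hY).2 S
    _ = (g - 1) * (#B).choose h := by rw [sum_const, card_powersetCard, smul_eq_mul, mul_comm]

theorem IsChSet.sum_descFactorial_reprCount_le {g h : ℕ} {A : Finset Γ}
    (hA : IsChSet h g (A : Set Γ)) (B S : Finset Γ) :
    ∑ s ∈ S, (reprCount A B s).descFactorial h ≤ (g - 1) * #B ^ h := by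
  simp_rw [Nat.descFactorial_eq_factorial_mul_choose, ← mul_sum]
  calc h.factorial * ∑ s ∈ S, (reprCount A B s).choose h
      ≤ h.factorial * ((g - 1) * (#B).choose h) :=
        Nat.mul_le_mul_left _ (hA.sum_choose_reprCount_le B S)
    _ = (g - 1) * (#B).descFactorial h := by
        rw [Nat.descFactorial_eq_factorial_mul_choose]; ring
    _ ≤ (g - 1) * #B ^ h := Nat.mul_le_mul_left _ (Nat.descFactorial_le_pow _ _)

end Representations

theorem convexOn_mul_max_sub_pow (k : ℕ) (c : ℝ) :
    ConvexOn ℝ (Set.Ici 0) fun x : ℝ => x * max (x - c) 0 ^ k := by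
  have hu : ConvexOn ℝ (Set.Ici 0) fun x : ℝ => max (x - c) 0 :=
    ((convexOn_id (convex_Ici 0)).sub (concaveOn_const c (convex_Ici 0))).sup
      (convexOn_const 0 (convex_Ici 0))
  have hmono : Monotone fun x : ℝ => max (x - c) 0 ^ k := fun x y hxy =>
    pow_le_pow_left₀ (le_max_right _ _) (max_le_max (by linarith) le_rfl) k
  exact (convexOn_id (convex_Ici 0)).mul (hu.pow (fun _ _ => le_max_right _ _) k)
    (fun _ hx => hx) (fun _ _ => by positivity) ((monotone_id.monovary hmono).monovaryOn _)

theorem mul_max_sub_pow_le_descFactorial (r k : ℕ) :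
    (r : ℝ) * max ((r : ℝ) - k) 0 ^ k ≤ r.descFactorial (k + 1) := by
  have hnat : r * (r - k) ^ k ≤ r.descFactorial (k + 1) := by
    rcases r with _ | r
    · simp
    · rw [Nat.succ_descFactorial_succ]
      exact Nat.mul_le_mul_left _ (Nat.pow_sub_le_descFactorial r k)
  have hmax : max ((r : ℝ) - k) 0 = ((r - k : ℕ) : ℝ) := by
    rcases le_total k r with hkr | hrk
    · rw [Nat.cast_sub hkr, max_eq_left (by simpa using hkr)]
    · rw [Nat.sub_eq_zero_of_le hrk, max_eq_right (by simpa using hrk), Nat.cast_zero]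
  rw [hmax]
  exact_mod_cast hnat

/-- Jensen's inequality for `x ↦ x (x - c)₊^k` at the mean `a b / #S`, rescaled by `#S / b`. -/
theorem mul_max_sub_pow_le_of_sum {ι : Type*} {S : Finset ι} {r : ι → ℝ} {k : ℕ} {a b c G : ℝ}
    (hS : S.Nonempty) (hr : ∀ i ∈ S, 0 ≤ r i) (hb : 0 < b) (hsum : ∑ i ∈ S, r i = a * b)
    (hψ : ∑ i ∈ S, r i * max (r i - c) 0 ^ k ≤ G * b ^ (k + 1)) :
    a * max (a - c * #S / b) 0 ^ k ≤ G * #S ^ k := by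
  set m : ℝ := (#S : ℝ)
  have hm : 0 < m := by simpa [m] using hS.card_pos
  have hjensen := (convexOn_mul_max_sub_pow k c).map_sum_le (t := S) (w := fun _ => m⁻¹) (p := r)
    (fun _ _ => by positivity) (by simp [m, hm.ne']) hr
  simp only [smul_eq_mul, ← mul_sum, hsum] at hjensen
  have hscale : a * max (a - c * m / b) 0 ^ k
      = (m / b) ^ (k + 1) * (m⁻¹ * (a * b) * max (m⁻¹ * (a * b) - c) 0 ^ k) := by
    have hmax : max (a - c * m / b) 0 = m / b * max (m⁻¹ * (a * b) - c) 0 := by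
      rw [mul_max_of_nonneg _ _ (by positivity), mul_zero]
      congr 1
      field_simp
    rw [hmax, mul_pow, pow_succ]
    field_simp
  calc a * max (a - c * m / b) 0 ^ k
      ≤ (m / b) ^ (k + 1) * (m⁻¹ * (G * b ^ (k + 1))) := by
        rw [hscale]
        exact mul_le_mul_of_nonneg_left (hjensen.trans (by gcongr)) (by positivity)
    _ = G * m ^ k := by
        rw [div_pow, pow_succ m]
        field_simp

theorem rpow_one_add_one_div_le_of_mul_max_sub_pow_le {k : ℕ} (hk : k ≠ 0) {a t G m : ℝ}
    (ha : 0 ≤ a) (hG : 0 ≤ G) (hm : 0 ≤ m) (H : a * max (a - t) 0 ^ k ≤ G * m ^ k) :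
    a ^ (1 + 1 / (k : ℝ)) ≤ G ^ (1 / (k : ℝ)) * m + t * a ^ (1 / (k : ℝ)) := by
  have hroot : ∀ {x y : ℝ}, 0 ≤ x → 0 ≤ y → (x * y ^ k) ^ (1 / (k : ℝ)) = x ^ (1 / (k : ℝ)) * y :=
    fun hx hy => by
      rw [Real.mul_rpow hx (by positivity), one_div, Real.pow_rpow_inv_natCast hy hk]
  have hmain : a ^ (1 / (k : ℝ)) * max (a - t) 0 ≤ G ^ (1 / (k : ℝ)) * m := by
    rw [← hroot ha (le_max_right _ _), ← hroot hG hm]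
    exact Real.rpow_le_rpow (by positivity) H (by positivity)
  calc a ^ (1 + 1 / (k : ℝ))
      = a ^ (1 / (k : ℝ)) * (a - t) + t * a ^ (1 / (k : ℝ)) := by
        rw [add_comm, Real.rpow_add_one' ha (by positivity)]; ring
    _ ≤ G ^ (1 / (k : ℝ)) * m + t * a ^ (1 / (k : ℝ)) :=
        add_le_add_left
          ((mul_le_mul_of_nonneg_left (le_max_left _ _) (by positivity)).trans hmain) _

theorem stmt3_general (g h : ℕ) (hh : 2 ≤ h) (hgh : h ≤ g) (A B : Finset ℤ)
    (hBcard : h ≤ B.card) (hA : IsChSet h g (A : Set ℤ)) :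
    (A.card : ℝ) ^ ((h : ℝ) / ((h : ℝ) - 1)) ≤ ((A + B).card : ℝ) *
      (((g : ℝ) - 1) ^ ((1 : ℝ) / ((h : ℝ) - 1))
        + ((h : ℝ) - 1) * (A.card : ℝ) ^ ((1 : ℝ) / ((h : ℝ) - 1)) / (B.card : ℝ)) := by
  obtain ⟨k, rfl⟩ : ∃ k, h = k + 1 := ⟨h - 1, by omega⟩
  have hk : k ≠ 0 := by omega
  rcases A.eq_empty_or_nonempty with rfl | hAne
  · simp [Real.zero_rpow (by positivity : ((k : ℝ) + 1) / k ≠ 0)]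
  have hBne : B.Nonempty := card_pos.1 (by omega)
  have hg : ((g - 1 : ℕ) : ℝ) = (g : ℝ) - 1 := by rw [Nat.cast_sub (by omega), Nat.cast_one]
  have hψ : ∑ s ∈ A + B, (reprCount A B s : ℝ) * max ((reprCount A B s : ℝ) - k) 0 ^ k
      ≤ ((g : ℝ) - 1) * (#B : ℝ) ^ (k + 1) := by
    rw [← hg]
    refine (sum_le_sum fun s _ => mul_max_sub_pow_le_descFactorial _ k).trans ?_
    exact_mod_cast hA.sum_descFactorial_reprCount_le B (A + B)
  have hcount := mul_max_sub_pow_le_of_sum (a := (#A : ℝ)) (hAne.add hBne)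
    (fun _ _ => Nat.cast_nonneg _) (by simpa using hBne.card_pos)
    (by exact_mod_cast sum_reprCount_add A B) hψ
  have hbound := rpow_one_add_one_div_le_of_mul_max_sub_pow_le hk (Nat.cast_nonneg _)
    (by rw [← hg]; positivity) (Nat.cast_nonneg _) hcount
  have hexp : ((k : ℝ) + 1) / k = 1 + 1 / k := by field_simp
  push_cast
  rw [add_sub_cancel_right, hexp]
  convert hbound using 1
  ring

theorem stmt3 (g h n : ℕ) (hh : 2 ≤ h) (hgh : h ≤ g) (A B : Finset ℤ)
    (hAn : (A : Set ℤ) ⊆ Set.Icc 1 (n : ℤ)) (hBn : (B : Set ℤ) ⊆ Set.Icc 1 (n : ℤ))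
    (hBcard : h ≤ B.card) (hA : IsChSet h g (A : Set ℤ)) :
    (A.card : ℝ) ^ ((h : ℝ) / ((h : ℝ) - 1)) ≤ ((A + B).card : ℝ) *
      (((g : ℝ) - 1) ^ ((1 : ℝ) / ((h : ℝ) - 1))
        + ((h : ℝ) - 1) * (A.card : ℝ) ^ ((1 : ℝ) / ((h : ℝ) - 1)) / (B.card : ℝ)) :=
  stmt3_general g h hh hgh A B hBcard hA
end

section
/- Let p be an odd prime and let α ∈ 𝔽_p be a quadratic non-residue if p ≡ 1 (mod 4), and a nonzero quadratic residue if p ≡ 3 (mod 4). Then the set A = { (x_1, x_2, x_3) ∈ 𝔽_p^3 : x_1² + x_2² + x_3² = α } is a C_3[3]-set in the additive group 𝔽_p^3, and |A| ≥ p² - p. -/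
open Finset Matrix

theorem IsChSet.preimage {Γ Γ' : Type*} [AddCommGroup Γ] [AddCommGroup Γ'] {h g : ℕ}
    {A : Set Γ'} (hA : IsChSet h g A) (f : Γ →+ Γ') (hf : Function.Injective f) :
    IsChSet h g (f ⁻¹' A) := by
  intro X hX K hK
  obtain ⟨k', hk', hout⟩ := hA (X.map ⟨f, hf⟩) (by rw [card_map, hX]) (K.map ⟨f, hf⟩)
    (by rw [card_map, hK])
  obtain ⟨k, hk, rfl⟩ := mem_map.1 hk'
  refine ⟨k, hk, fun hall => hout ?_⟩
  simpa [forall_mem_map, map_add] using hall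

def prodEquivFinThree (K : Type*) [AddCommGroup K] : K × K × K ≃+ (Fin 3 → K) where
  toFun x := ![x.1, x.2.1, x.2.2]
  invFun v := (v 0, v 1, v 2)
  left_inv _ := rfl
  right_inv v := by ext i; fin_cases i <;> rfl
  map_add' _ _ := by ext i; fin_cases i <;> rfl

theorem prodEquivFinThree_dotProduct_self {K : Type*} [CommRing K] (x : K × K × K) :
    prodEquivFinThree K x ⬝ᵥ prodEquivFinThree K x = x.1 ^ 2 + x.2.1 ^ 2 + x.2.2 ^ 2 := by
  change ![x.1, x.2.1, x.2.2] ⬝ᵥ ![x.1, x.2.1, x.2.2] = _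
  rw [vec3_dotProduct']
  ring

section Sphere
variable {R n : Type*} [CommRing R] [NoZeroDivisors R] [Fintype n]

theorem dotProduct_sub_eq_zero_of_add_mem_sphere (h2 : (2 : R) ≠ 0) {α : R} {x a k k' : n → R}
    (hxk : (x + k) ⬝ᵥ (x + k) = α) (hak : (a + k) ⬝ᵥ (a + k) = α)
    (hxk' : (x + k') ⬝ᵥ (x + k') = α) (hak' : (a + k') ⬝ᵥ (a + k') = α) :
    (x - a) ⬝ᵥ (k - k') = 0 := by
  have polar : 2 * ((x - a) ⬝ᵥ (k - k')) =
      (x + k) ⬝ᵥ (x + k) - (a + k) ⬝ᵥ (a + k) - (x + k') ⬝ᵥ (x + k') + (a + k') ⬝ᵥ (a + k') := by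
    simp only [add_dotProduct, dotProduct_add, sub_dotProduct, dotProduct_sub,
      dotProduct_comm k, dotProduct_comm k']
    ring
  rw [hxk, hak, hxk', hak', sub_self, zero_sub, neg_add_cancel] at polar
  exact (mul_eq_zero.1 polar).resolve_left h2

theorem isotropic_and_orthogonal_of_collinear_on_sphere (h2 : (2 : R) ≠ 0) {α s t : R}
    {v w : n → R} (hs : s ≠ 0) (ht : t ≠ 0) (hst : s ≠ t) (hv : v ⬝ᵥ v = α)
    (hvs : (v + s • w) ⬝ᵥ (v + s • w) = α) (hvt : (v + t • w) ⬝ᵥ (v + t • w) = α) :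
    w ⬝ᵥ w = 0 ∧ v ⬝ᵥ w = 0 := by
  have expand (r : R) : (v + r • w) ⬝ᵥ (v + r • w) - v ⬝ᵥ v =
      r * (2 * (v ⬝ᵥ w) + r * (w ⬝ᵥ w)) := by
    simp only [add_dotProduct, dotProduct_add, smul_dotProduct, dotProduct_smul, smul_eq_mul,
      dotProduct_comm w v]
    ring
  have hs' : s * (2 * (v ⬝ᵥ w) + s * (w ⬝ᵥ w)) = 0 := by rw [← expand, hvs, hv, sub_self]
  have ht' : t * (2 * (v ⬝ᵥ w) + t * (w ⬝ᵥ w)) = 0 := by rw [← expand, hvt, hv, sub_self]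
  replace hs' := (mul_eq_zero.1 hs').resolve_left hs
  replace ht' := (mul_eq_zero.1 ht').resolve_left ht
  have hww : w ⬝ᵥ w = 0 :=
    (mul_eq_zero.1 (by linear_combination hs' - ht' : (s - t) * (w ⬝ᵥ w) = 0)).resolve_left
      (sub_ne_zero.2 hst)
  have h2vw : 2 * (v ⬝ᵥ w) = 0 := by linear_combination hs' - s * hww
  exact ⟨hww, (mul_eq_zero.1 h2vw).resolve_left h2⟩

end Sphere

section Geometry
variable {K : Type*} [Field K]

theorem exists_smul_eq_of_cross_eq_zero {w u : Fin 3 → K} (hw : w ≠ 0) (h : w ⨯₃ u = 0) :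
    ∃ μ : K, μ • w = u := by
  by_contra! hne
  exact crossProduct_ne_zero_iff_linearIndependent.2 ((LinearIndependent.pair_iff' hw).2 hne) h

theorem exists_smul_cross_eq_of_dotProduct_eq_zero {u v d : Fin 3 → K} (huv : u ⨯₃ v ≠ 0)
    (hu : u ⬝ᵥ d = 0) (hv : v ⬝ᵥ d = 0) : ∃ μ : K, μ • (u ⨯₃ v) = d :=
  exists_smul_eq_of_cross_eq_zero huv <| by
    rw [cross_cross_eq_smul_sub_smul, hu, hv, zero_smul, zero_smul, sub_zero]

theorem isSquare_neg_dotProduct_self_of_isotropic {w v : Fin 3 → K} (hw : w ≠ 0)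
    (hww : w ⬝ᵥ w = 0) (hwv : w ⬝ᵥ v = 0) : IsSquare (-(v ⬝ᵥ v)) := by
  obtain ⟨μ, hμ⟩ : ∃ μ : K, μ • w = w ⨯₃ v := exists_smul_eq_of_cross_eq_zero hw <| by
    rw [cross_cross_eq_smul_sub_smul', hwv, hww, zero_smul, zero_smul, sub_zero]
  have key : (v ⬝ᵥ v) • w = (-(μ * μ)) • w :=
    calc (v ⬝ᵥ v) • w = v ⨯₃ (w ⨯₃ v) := by
          rw [cross_cross_eq_smul_sub_smul', hwv, zero_smul, sub_zero]
      _ = (-(μ * μ)) • w := by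
          rw [← hμ, map_smul, ← cross_anticomm w v, ← hμ, smul_neg, smul_smul, neg_smul]
  exact ⟨μ, by rw [smul_left_injective K hw key, neg_neg]⟩

theorem isSquare_neg_of_add_mem_sphere (h2 : (2 : K) ≠ 0) {α : K}
    {X T : Finset (Fin 3 → K)} (hX : #X = 3) (hT : #T = 3)
    (hXT : ∀ x ∈ X, ∀ k ∈ T, (x + k) ⬝ᵥ (x + k) = α) : IsSquare (-α) := by
  classical
  obtain ⟨a, b, c, hab, hac, hbc, rfl⟩ := card_eq_three.1 hX
  obtain ⟨k₁, k₂, k₃, h12, h13, h23, rfl⟩ := card_eq_three.1 hT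
  simp only [mem_insert, mem_singleton, forall_eq_or_imp, forall_eq] at hXT
  obtain ⟨⟨ha₁, ha₂, ha₃⟩, ⟨hb₁, hb₂, hb₃⟩, ⟨hc₁, hc₂, hc₃⟩⟩ := hXT
  suffices ∃ w, w ≠ 0 ∧ w ⬝ᵥ w = 0 ∧ (a + k₁) ⬝ᵥ w = 0 by
    obtain ⟨w, hw, hww, hvw⟩ := this
    rw [← ha₁]
    exact isSquare_neg_dotProduct_self_of_isotropic hw hww (by rwa [dotProduct_comm])
  have hba : b - a ≠ 0 := sub_ne_zero.2 hab.symm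
  by_cases hn : (b - a) ⨯₃ (c - a) = 0
  · obtain ⟨μ, hμ⟩ := exists_smul_eq_of_cross_eq_zero hba hn
    have hμ0 : μ ≠ 0 := by
      rintro rfl; rw [zero_smul, eq_comm, sub_eq_zero] at hμ; exact hac hμ.symm
    have hμ1 : 1 ≠ μ := by rintro rfl; rw [one_smul, sub_left_inj] at hμ; exact hbc hμ
    refine ⟨b - a, hba, isotropic_and_orthogonal_of_collinear_on_sphere h2 one_ne_zero hμ0 hμ1
      ha₁ ?_ ?_⟩
    · rwa [one_smul, add_right_comm, add_sub_cancel]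
    · rwa [hμ, add_right_comm, add_sub_cancel]
  · have orth {x k} (hxk : (x + k) ⬝ᵥ (x + k) = α) (hak : (a + k) ⬝ᵥ (a + k) = α)
        (hx₁ : (x + k₁) ⬝ᵥ (x + k₁) = α) : (x - a) ⬝ᵥ (k - k₁) = 0 :=
      dotProduct_sub_eq_zero_of_add_mem_sphere h2 hxk hak hx₁ ha₁
    obtain ⟨μ₂, hμ₂⟩ := exists_smul_cross_eq_of_dotProduct_eq_zero hn (orth hb₂ ha₂ hb₁)
      (orth hc₂ ha₂ hc₁)
    obtain ⟨μ₃, hμ₃⟩ := exists_smul_cross_eq_of_dotProduct_eq_zero hn (orth hb₃ ha₃ hb₁)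
      (orth hc₃ ha₃ hc₁)
    have hμ₂0 : μ₂ ≠ 0 := by
      rintro rfl; rw [zero_smul, eq_comm, sub_eq_zero] at hμ₂; exact h12 hμ₂.symm
    have hμ₃0 : μ₃ ≠ 0 := by
      rintro rfl; rw [zero_smul, eq_comm, sub_eq_zero] at hμ₃; exact h13 hμ₃.symm
    have hμ₂₃ : μ₂ ≠ μ₃ := by
      rintro rfl; rw [hμ₂, sub_left_inj] at hμ₃; exact h23 hμ₃
    refine ⟨_, hn, isotropic_and_orthogonal_of_collinear_on_sphere h2 hμ₂0 hμ₃0 hμ₂₃ ha₁ ?_ ?_⟩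
    · rwa [hμ₂, add_assoc, add_sub_cancel]
    · rwa [hμ₃, add_assoc, add_sub_cancel]

theorem isChSet_three_three_sphere (h2 : (2 : K) ≠ 0) {α : K}
    (hα : ¬ IsSquare (-α)) : IsChSet 3 3 {v : Fin 3 → K | v ⬝ᵥ v = α} := by
  intro X hX T hT
  by_contra! h
  exact hα (isSquare_neg_of_add_mem_sphere h2 hX hT fun x hx k hk => h k hk x hx)

end Geometry

section Counting
variable {F : Type*} [Field F] [Fintype F] [DecidableEq F]

theorem card_filter_sq_eq (hF : ringChar F ≠ 2) (a : F) :
    (#{x : F | x ^ 2 = a} : ℤ) = quadraticChar F a + 1 := by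
  rw [← quadraticChar_card_sqrts hF a, Set.toFinset_ofPred]

theorem sum_comp_sq (hF : ringChar F ≠ 2) (f : F → ℤ) :
    ∑ z, f (z ^ 2) = ∑ t, (quadraticChar F t + 1) * f t := by
  rw [← Fintype.sum_fiberwise' (fun z : F => z ^ 2) f]
  refine Fintype.sum_congr _ _ fun t => ?_
  rw [sum_const, card_univ, Fintype.card_subtype, nsmul_eq_mul, card_filter_sq_eq hF]

theorem sum_quadraticChar_sq : ∑ z : F, quadraticChar F (z ^ 2) = Fintype.card F - 1 :=
  calc ∑ z : F, quadraticChar F (z ^ 2) = ∑ z ∈ univ.erase 0, quadraticChar F (z ^ 2) :=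
        (sum_erase _ (by simp)).symm
    _ = ∑ z ∈ univ.erase (0 : F), 1 :=
        sum_congr rfl fun z hz => quadraticChar_sq_one' (ne_of_mem_erase hz)
    _ = Fintype.card F - 1 := by simp [card_erase_of_mem, Nat.cast_sub Fintype.card_pos]

theorem sum_quadraticChar_mul_quadraticChar_sub (hF : ringChar F ≠ 2) {c : F} (hc : c ≠ 0) :
    ∑ t, quadraticChar F t * quadraticChar F (c - t) = -quadraticChar F (-1) :=
  calc ∑ t, quadraticChar F t * quadraticChar F (c - t)
      = ∑ x, quadraticChar F (c * x) * quadraticChar F (c - c * x) :=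
        (Fintype.sum_equiv (Equiv.mulLeft₀ c hc) _ _ fun _ => rfl).symm
    _ = ∑ x, quadraticChar F x * quadraticChar F (1 - x) := by
        refine Fintype.sum_congr _ _ fun x => ?_
        rw [← mul_one_sub, map_mul, map_mul]
        linear_combination quadraticChar F x * quadraticChar F (1 - x) * quadraticChar_sq_one hc
    _ = jacobiSum (quadraticChar F) (quadraticChar F)⁻¹ := by
        rw [(quadraticChar_isQuadratic F).inv]; rfl
    _ = -quadraticChar F (-1) := jacobiSum_nontrivial_inv (quadraticChar_ne_one hF)

theorem sum_quadraticChar_sub_sq (hF : ringChar F ≠ 2) (c : F) :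
    ∑ z, quadraticChar F (c - z ^ 2) =
      quadraticChar F (-1) * ((if c = 0 then (Fintype.card F : ℤ) else 0) - 1) := by
  split_ifs with hc
  · simp_rw [hc, zero_sub, neg_eq_neg_one_mul (_ ^ 2), map_mul]
    rw [← mul_sum, sum_quadraticChar_sq]
  · have hshift : ∑ t, quadraticChar F (c - t) = 0 :=
      (Fintype.sum_equiv (Equiv.subLeft c) _ _ fun _ => rfl).trans (quadraticChar_sum_zero hF)
    rw [sum_comp_sq hF fun t => quadraticChar F (c - t)]
    simp_rw [add_mul, one_mul]
    rw [sum_add_distrib, hshift, sum_quadraticChar_mul_quadraticChar_sub hF hc]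
    ring

theorem sum_quadraticChar_sub_sq_sub_sq (hF : ringChar F ≠ 2) (α : F) :
    ∑ y, ∑ z, quadraticChar F (α - y ^ 2 - z ^ 2) =
      quadraticChar F (-α) * Fintype.card F := by
  have hsq : ∑ y, (if α - y ^ 2 = 0 then (Fintype.card F : ℤ) else 0) =
      (quadraticChar F α + 1) * Fintype.card F := by
    rw [sum_comp_sq hF fun t => if α - t = 0 then (Fintype.card F : ℤ) else 0]
    simp_rw [sub_eq_zero, mul_ite, mul_zero]
    rw [sum_ite_eq]
    simp
  simp_rw [sum_quadraticChar_sub_sq hF, ← mul_sum, sum_sub_distrib, hsq]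
  rw [neg_eq_neg_one_mul α, map_mul, sum_const, card_univ, nsmul_eq_mul, mul_one]
  ring

theorem card_sphere (hF : ringChar F ≠ 2) (α : F) :
    (#{x : F × F × F | x.1 ^ 2 + x.2.1 ^ 2 + x.2.2 ^ 2 = α} : ℤ) =
      Fintype.card F ^ 2 + quadraticChar F (-α) * Fintype.card F := by
  have hfiber (y z : F) : (#{x : F | x ^ 2 + y ^ 2 + z ^ 2 = α} : ℤ) =
      quadraticChar F (α - y ^ 2 - z ^ 2) + 1 := by
    rw [← card_filter_sq_eq hF]
    congr 3
    ext x
    constructor <;> intro h <;> linear_combination h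
  calc (#{x : F × F × F | x.1 ^ 2 + x.2.1 ^ 2 + x.2.2 ^ 2 = α} : ℤ)
      = ∑ y, ∑ z, (#{x : F | x ^ 2 + y ^ 2 + z ^ 2 = α} : ℤ) := by
        simp only [card_filter, Nat.cast_sum, Fintype.sum_prod_type]
        rw [sum_comm]
        exact Fintype.sum_congr _ _ fun y => sum_comm
    _ = Fintype.card F ^ 2 + quadraticChar F (-α) * Fintype.card F := by
        simp_rw [hfiber, sum_add_distrib, sum_quadraticChar_sub_sq_sub_sq hF, sum_const, card_univ,
          nsmul_eq_mul, mul_one]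
        ring

end Counting

theorem ZMod.not_isSquare_neg {p : ℕ} [Fact p.Prime] (hodd : Odd p) {α : ZMod p}
    (hα : if p % 4 = 1 then ¬ IsSquare α else α ≠ 0 ∧ IsSquare α) : ¬ IsSquare (-α) := by
  intro hneg
  split_ifs at hα with hp
  · have hsq : IsSquare (-1 : ZMod p) := ZMod.exists_sq_eq_neg_one_iff.2 (by omega)
    exact hα (by simpa using hsq.mul hneg)
  · obtain ⟨hα0, hsq⟩ := hα
    have : IsSquare (-1 : ZMod p) := by simpa [neg_div_self hα0] using hneg.div hsq
    have := ZMod.exists_sq_eq_neg_one_iff.1 this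
    have := Nat.odd_iff.1 hodd
    omega

theorem stmt5 (p : ℕ) [Fact p.Prime] (hodd : Odd p) (α : ZMod p)
    (hα : if p % 4 = 1 then ¬ IsSquare α else α ≠ 0 ∧ IsSquare α) :
    IsChSet 3 3 {x : ZMod p × ZMod p × ZMod p | x.1 ^ 2 + x.2.1 ^ 2 + x.2.2 ^ 2 = α} ∧
    (p : ℤ) ^ 2 - (p : ℤ) ≤
      ({x : ZMod p × ZMod p × ZMod p | x.1 ^ 2 + x.2.1 ^ 2 + x.2.2 ^ 2 = α} : Set _).ncard := by
  have hF : ringChar (ZMod p) ≠ 2 := by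
    rw [ZMod.ringChar_zmod_n]; rintro rfl; exact Nat.not_even_iff_odd.2 hodd even_two
  have hsphere : {x : ZMod p × ZMod p × ZMod p | x.1 ^ 2 + x.2.1 ^ 2 + x.2.2 ^ 2 = α} =
      prodEquivFinThree (ZMod p) ⁻¹' {v | v ⬝ᵥ v = α} := by
    ext x; simp [prodEquivFinThree_dotProduct_self]
  refine ⟨?_, ?_⟩
  · rw [hsphere]
    exact (isChSet_three_three_sphere (Ring.two_ne_zero hF)
      (ZMod.not_isSquare_neg hodd hα)).preimage (prodEquivFinThree (ZMod p)).toAddMonoidHom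
      (prodEquivFinThree (ZMod p)).injective
  · rw [Set.ncard_eq_toFinset_card', Set.toFinset_ofPred, card_sphere hF, ZMod.card]
    rcases quadraticChar_isQuadratic (ZMod p) (-α) with h | h | h <;> rw [h] <;> nlinarith
end

section
/- Let g ≥ h ≥ 2 be integers. For all sufficiently large n there exists a weak C_h[g]-set A ⊆ [n] (with the condition taken in the group ℤ) such that |A| ≥ (1/8) · n^{(1 - 1/h)(1 - 1/g)(1 + 1/(hg - 1))}. -/
/-!
Deletion method. A translate-disjoint configuration `X + k ⊆ A` (`k ∈ K`) is a grid `X + K`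
with `#(X + K) = h g`. A grid in `[1, n]` is determined by the `h - 1` nonzero elements of
`X - min X` and by `K + min X`, so there are at most `n ^ (h + g - 1)` grids. A uniformly random
`m`-subset of `[1, n]` contains a fixed grid with probability at most `(m / n) ^ (h g)`; taking a
subset with at most the expected number of grids and deleting a point of each leaves at least
`m - n ^ (h + g - 1) (m / n) ^ (h g)` points. For `x = n ^ β` with `β (h g - 1) = (h - 1) (g - 1)`
one has `n ^ (h + g - 1) x ^ (h g) = n ^ (h g) x`, so `m ≈ x / 4` loses at most `x / 16` points.
-/

/-- `A ⊆ Γ` is a weak `C_h[g]`-set: for every `X ⊆ Γ` with `|X| = h` and every set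
`K` of `g` distinct elements of `Γ` for which the translates `X + k`, `k ∈ K`, are
pairwise disjoint, at least one translate `X + k` is not contained in `A`. -/
def IsWeakChSet {Γ : Type*} [AddCommGroup Γ] (h g : ℕ) (A : Set Γ) : Prop :=
  ∀ X : Finset Γ, X.card = h → ∀ K : Finset Γ, K.card = g →
    (∀ k ∈ K, ∀ k' ∈ K, k ≠ k' →
      Disjoint ((fun x => x + k) '' (X : Set Γ)) ((fun x => x + k') '' (X : Set Γ))) →
    ∃ k ∈ K, ¬ (∀ x ∈ X, x + k ∈ A)

open Finset
open scoped Pointwise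

theorem Nat.descFactorial_mul_pow_le_of_le {m n : ℕ} (hmn : m ≤ n) (j : ℕ) :
    m.descFactorial j * n ^ j ≤ n.descFactorial j * m ^ j := by
  induction j with
  | zero => simp
  | succ j ih =>
    have hstep : (m - j) * n ≤ (n - j) * m := by
      rw [Nat.sub_mul, Nat.sub_mul, Nat.mul_comm n m]
      exact Nat.sub_le_sub_left (Nat.mul_le_mul_left j hmn) _
    calc m.descFactorial (j + 1) * n ^ (j + 1)
        = ((m - j) * n) * (m.descFactorial j * n ^ j) := by
          rw [Nat.descFactorial_succ, pow_succ]; ring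
      _ ≤ ((n - j) * m) * (n.descFactorial j * m ^ j) := Nat.mul_le_mul hstep ih
      _ = n.descFactorial (j + 1) * m ^ (j + 1) := by
          rw [Nat.descFactorial_succ, pow_succ]; ring

theorem Nat.choose_sub_mul_pow_le {t m n : ℕ} (htm : t ≤ m) (hmn : m ≤ n) :
    (n - t).choose (m - t) * n ^ t ≤ n.choose m * m ^ t := by
  have hchoose : n.descFactorial t * (n - t).choose (m - t) = n.choose m * m.descFactorial t := by
    rw [Nat.descFactorial_eq_factorial_mul_choose, Nat.descFactorial_eq_factorial_mul_choose,
      mul_assoc, ← Nat.choose_mul htm]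
    ring
  refine Nat.le_of_mul_le_mul_left ?_ (Nat.descFactorial_pos.2 (htm.trans hmn))
  calc n.descFactorial t * ((n - t).choose (m - t) * n ^ t)
      = n.choose m * (m.descFactorial t * n ^ t) := by rw [← mul_assoc, hchoose, mul_assoc]
    _ ≤ n.choose m * (n.descFactorial t * m ^ t) :=
        Nat.mul_le_mul_left _ (Nat.descFactorial_mul_pow_le_of_le hmn t)
    _ = n.descFactorial t * (n.choose m * m ^ t) := by ring

namespace Finset

variable {α : Type*} [DecidableEq α]

theorem exists_subset_card_filter_subset_mul_pow_le {U : Finset α} {𝒯 : Finset (Finset α)}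
    {t m : ℕ} (h𝒯 : ∀ T ∈ 𝒯, T ⊆ U ∧ #T = t) (htm : t ≤ m) (hmU : m ≤ #U) :
    ∃ S ⊆ U, #S = m ∧ #{T ∈ 𝒯 | T ⊆ S} * #U ^ t ≤ #𝒯 * m ^ t := by
  set P := U.powersetCard m
  have hP : P.Nonempty := powersetCard_nonempty.2 hmU
  have hdouble : ∑ S ∈ P, #{T ∈ 𝒯 | T ⊆ S} = #𝒯 * (#U - t).choose (m - t) := by
    have := sum_card_bipartiteAbove_eq_sum_card_bipartiteBelow (s := P) (t := 𝒯)
      (r := fun S T => T ⊆ S)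
    simp only [bipartiteAbove, bipartiteBelow] at this
    rw [this, ← smul_eq_mul, ← sum_const]
    refine sum_congr rfl fun T hT => ?_
    obtain ⟨hTU, hTt⟩ := h𝒯 T hT
    rw [card_filter_powersetCard_subset T U m hTU (hTt ▸ htm), hTt]
  obtain ⟨S, hS, hSle⟩ :
      ∃ S ∈ P, #P * #{T ∈ 𝒯 | T ⊆ S} ≤ #𝒯 * (#U - t).choose (m - t) := by
    refine exists_le_of_sum_le hP ?_
    rw [← mul_sum, hdouble, sum_const, smul_eq_mul]
  obtain ⟨hSU, hSm⟩ := mem_powersetCard.1 hS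
  refine ⟨S, hSU, hSm, Nat.le_of_mul_le_mul_left ?_ hP.card_pos⟩
  calc #P * (#{T ∈ 𝒯 | T ⊆ S} * #U ^ t)
      = #P * #{T ∈ 𝒯 | T ⊆ S} * #U ^ t := (mul_assoc _ _ _).symm
    _ ≤ #𝒯 * ((#U - t).choose (m - t) * #U ^ t) := by
        rw [← mul_assoc]; exact Nat.mul_le_mul_right _ hSle
    _ ≤ #𝒯 * ((#U).choose m * m ^ t) :=
        Nat.mul_le_mul_left _ (Nat.choose_sub_mul_pow_le htm hmU)
    _ = #P * (#𝒯 * m ^ t) := by rw [card_powersetCard]; ring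

theorem exists_subset_card_le_add_forall_not_subset (S : Finset α) {ℬ : Finset (Finset α)}
    (hℬ : ∀ T ∈ ℬ, T.Nonempty) :
    ∃ A ⊆ S, #S ≤ #A + #ℬ ∧ ∀ T ∈ ℬ, ¬ T ⊆ A := by
  induction ℬ using Finset.induction_on with
  | empty => exact ⟨S, subset_rfl, by simp, by simp⟩
  | insert T ℬ hTℬ ih =>
    obtain ⟨A, hAS, hcard, hfree⟩ := ih fun T' hT' => hℬ T' (mem_insert_of_mem hT')
    rw [card_insert_of_notMem hTℬ]
    by_cases hTA : T ⊆ A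
    · obtain ⟨x, hx⟩ := hℬ T (mem_insert_self T ℬ)
      refine ⟨A.erase x, (erase_subset x A).trans hAS, ?_, ?_⟩
      · rw [card_erase_of_mem (hTA hx)]
        have := card_pos.2 ⟨x, hTA hx⟩
        omega
      · simp only [mem_insert, forall_eq_or_imp]
        exact ⟨fun h => notMem_erase x A (h hx),
          fun T' hT' h => hfree T' hT' (h.trans (erase_subset x A))⟩
    · refine ⟨A, hAS, by omega, ?_⟩
      simp only [mem_insert, forall_eq_or_imp]
      exact ⟨hTA, hfree⟩

theorem image_sub_add_image_add {Γ : Type*} [AddCommGroup Γ] [DecidableEq Γ]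
    (X K : Finset Γ) (c : Γ) : X.image (· - c) + K.image (· + c) = X + K := by
  ext a
  simp only [mem_add, mem_image]
  constructor
  · rintro ⟨_, ⟨x, hx, rfl⟩, _, ⟨k, hk, rfl⟩, rfl⟩
    exact ⟨x, hx, k, hk, by abel⟩
  · rintro ⟨x, hx, k, hk, rfl⟩
    exact ⟨x - c, ⟨x, hx, rfl⟩, k + c, ⟨k, hk, rfl⟩, by abel⟩

theorem card_add_of_pairwise_disjoint_translates {Γ : Type*} [AddCommGroup Γ]
    [DecidableEq Γ] {X K : Finset Γ}
    (hdisj : ∀ k ∈ K, ∀ k' ∈ K, k ≠ k' →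
      Disjoint ((fun x => x + k) '' (X : Set Γ)) ((fun x => x + k') '' (X : Set Γ))) :
    #(X + K) = #X * #K := by
  refine card_add_iff.2 ?_
  rintro ⟨x, k⟩ hxk ⟨x', k'⟩ hxk' heq
  simp only [Set.mem_prod, mem_coe] at hxk hxk' heq
  by_cases hkk' : k = k'
  · subst hkk'
    simp_all
  · refine absurd ?_ (Set.disjoint_left.1 (hdisj k hxk.2 k' hxk'.2 hkk') ⟨x, hxk.1, rfl⟩)
    exact ⟨x', hxk'.1, heq.symm⟩

end Finset

theorem isWeakChSet_of_forall_not_subset {Γ : Type*} [AddCommGroup Γ] [DecidableEq Γ]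
    {h g : ℕ} {A : Set Γ}
    (hA : ∀ X K : Finset Γ, #X = h → #K = g → #(X + K) = h * g → ¬ ↑(X + K) ⊆ A) :
    IsWeakChSet h g A := by
  intro X hX K hK hdisj
  by_contra! hall
  refine hA X K hX hK (by rw [card_add_of_pairwise_disjoint_translates hdisj, hX, hK]) ?_
  intro a ha
  obtain ⟨x, hx, k, hk, rfl⟩ := mem_add.1 (mem_coe.1 ha)
  exact hall k hk x hx

def IsGrid (h g : ℕ) (T : Finset ℤ) : Prop :=
  ∃ X K : Finset ℤ, #X = h ∧ #K = g ∧ X + K = T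

open Classical in
noncomputable def gridFamily (h g n : ℕ) : Finset (Finset ℤ) :=
  {T ∈ (Icc 1 (n : ℤ)).powersetCard (h * g) | IsGrid h g T}

theorem exists_insert_zero_add_eq_of_mem_gridFamily {h g n : ℕ} (hh : 1 ≤ h) (hg : 1 ≤ g)
    {T : Finset ℤ} (hT : T ∈ gridFamily h g n) :
    ∃ X ∈ (Icc 1 (n : ℤ)).powersetCard (h - 1), ∃ K ∈ (Icc 1 (n : ℤ)).powersetCard g,
      insert 0 X + K = T := by
  classical
  obtain ⟨hT, X, K, hX, hK, rfl⟩ := mem_filter.1 hT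
  obtain ⟨hTn, -⟩ := mem_powersetCard.1 hT
  have hXne : X.Nonempty := card_pos.1 (by omega)
  obtain ⟨k₀, hk₀⟩ := card_pos.1 (by omega : 0 < #K)
  set x₀ := X.min' hXne
  have hmem : ∀ x ∈ X, ∀ k ∈ K, 1 ≤ x + k ∧ x + k ≤ n := fun x hx k hk =>
    mem_Icc.1 (hTn (mem_add.2 ⟨x, hx, k, hk, rfl⟩))
  have h0 : (0 : ℤ) ∈ X.image (· - x₀) :=
    mem_image.2 ⟨x₀, X.min'_mem hXne, sub_self x₀⟩
  refine ⟨(X.image (· - x₀)).erase 0, mem_powersetCard.2 ⟨?_, ?_⟩,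
    K.image (· + x₀), mem_powersetCard.2 ⟨?_, ?_⟩, ?_⟩
  · intro y hy
    obtain ⟨hy0, x, hx, rfl⟩ : y ≠ 0 ∧ ∃ x ∈ X, x - x₀ = y := by
      simpa only [mem_erase, mem_image] using hy
    have := X.min'_le x hx
    have := hmem x hx k₀ hk₀
    have := hmem x₀ (X.min'_mem hXne) k₀ hk₀
    exact mem_Icc.2 ⟨by omega, by omega⟩
  · rw [card_erase_of_mem h0, card_image_of_injective _ (sub_left_injective), hX]
  · intro y hy
    obtain ⟨k, hk, rfl⟩ := mem_image.1 hy
    have := hmem x₀ (X.min'_mem hXne) k hk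
    exact mem_Icc.2 ⟨by omega, by omega⟩
  · rw [card_image_of_injective _ (add_left_injective x₀), hK]
  · rw [insert_erase h0, image_sub_add_image_add]

theorem card_gridFamily_le {h g : ℕ} (hh : 1 ≤ h) (hg : 1 ≤ g) (n : ℕ) :
    #(gridFamily h g n) ≤ n ^ (h + g - 1) := by
  classical
  set P := (Icc 1 (n : ℤ)).powersetCard (h - 1) ×ˢ (Icc 1 (n : ℤ)).powersetCard g
  have hsub : gridFamily h g n ⊆ P.image fun p => insert 0 p.1 + p.2 := by
    intro T hT
    obtain ⟨X, hX, K, hK, rfl⟩ := exists_insert_zero_add_eq_of_mem_gridFamily hh hg hT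
    exact mem_image.2 ⟨(X, K), mem_product.2 ⟨hX, hK⟩, rfl⟩
  calc #(gridFamily h g n) ≤ #P := (card_le_card hsub).trans card_image_le
    _ = n.choose (h - 1) * n.choose g := by simp [P, card_powersetCard]
    _ ≤ n ^ (h - 1) * n ^ g := Nat.mul_le_mul (Nat.choose_le_pow _ _) (Nat.choose_le_pow _ _)
    _ = n ^ (h + g - 1) := by rw [← pow_add]; congr 1; omega

theorem exists_isWeakChSet_card_mul_pow_ge {h g : ℕ} (hh : 1 ≤ h) (hg : 1 ≤ g) {n m : ℕ}
    (hm : h * g ≤ m) (hmn : m ≤ n) :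
    ∃ A : Finset ℤ, (A : Set ℤ) ⊆ Set.Icc 1 (n : ℤ) ∧ IsWeakChSet h g (A : Set ℤ) ∧
      m * n ^ (h * g) ≤ #A * n ^ (h * g) + n ^ (h + g - 1) * m ^ (h * g) := by
  classical
  set 𝒯 := gridFamily h g n
  have h𝒯 : ∀ T ∈ 𝒯, T ⊆ Icc 1 (n : ℤ) ∧ #T = h * g := fun T hT =>
    mem_powersetCard.1 (mem_filter.1 hT).1
  have hU : #(Icc 1 (n : ℤ)) = n := by simp
  obtain ⟨S, hSU, hSm, hbad⟩ :=
    exists_subset_card_filter_subset_mul_pow_le h𝒯 hm (hmn.trans_eq hU.symm)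
  obtain ⟨A, hAS, hAcard, hAfree⟩ := exists_subset_card_le_add_forall_not_subset S
    (ℬ := {T ∈ 𝒯 | T ⊆ S}) fun T hT =>
      card_pos.1 (by rw [(h𝒯 T (mem_filter.1 hT).1).2]; positivity)
  refine ⟨A, ?_, ?_, ?_⟩
  · intro a ha
    simpa using hSU (hAS ha)
  · refine isWeakChSet_of_forall_not_subset fun X K hX hK hXK hXKA => ?_
    have hXKS : X + K ⊆ S := (coe_subset.1 hXKA).trans hAS
    refine hAfree (X + K) (mem_filter.2 ⟨mem_filter.2 ⟨?_, X, K, hX, hK, rfl⟩, hXKS⟩)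
      (coe_subset.1 hXKA)
    exact mem_powersetCard.2 ⟨hXKS.trans hSU, hXK⟩
  · rw [hU] at hbad
    calc m * n ^ (h * g) ≤ (#A + #{T ∈ 𝒯 | T ⊆ S}) * n ^ (h * g) :=
          Nat.mul_le_mul_right _ (hSm ▸ hAcard)
      _ ≤ #A * n ^ (h * g) + #𝒯 * m ^ (h * g) := by rw [add_mul]; omega
      _ ≤ #A * n ^ (h * g) + n ^ (h + g - 1) * m ^ (h * g) := by
          gcongr; exact card_gridFamily_le hh hg n

theorem rpow_add_sub_one_mul_rpow_pow {h g : ℕ} (hh : 1 ≤ h) {β y : ℝ} (hy : 0 < y)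
    (hβ : β * (h * g - 1) = (h - 1) * (g - 1)) :
    y ^ (h + g - 1) * (y ^ β) ^ (h * g) = y ^ (h * g) * y ^ β := by
  rw [← Real.rpow_natCast y, ← Real.rpow_natCast (y ^ β), ← Real.rpow_natCast y (h * g),
    ← Real.rpow_mul hy.le, ← Real.rpow_add hy, ← Real.rpow_add hy,
    Nat.cast_sub (by omega : 1 ≤ h + g)]
  push_cast
  congr 1
  linear_combination hβ

theorem pow_add_sub_one_mul_pow_le {h g : ℕ} (hh : 1 ≤ h) (hhg : 4 ≤ h * g) {β y z : ℝ}
    (hy : 0 < y) (hβ : β * (h * g - 1) = (h - 1) * (g - 1)) (hz : 0 ≤ z)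
    (hzy : z ≤ y ^ β / 2) :
    y ^ (h + g - 1) * z ^ (h * g) ≤ y ^ (h * g) * (y ^ β / 16) :=
  calc y ^ (h + g - 1) * z ^ (h * g)
      ≤ y ^ (h + g - 1) * (y ^ β / 2) ^ (h * g) := by gcongr
    _ = y ^ (h * g) * y ^ β * (1 / 2) ^ (h * g) := by
        rw [div_eq_mul_one_div (y ^ β), mul_pow, ← mul_assoc,
          rpow_add_sub_one_mul_rpow_pow hh hy hβ]
    _ ≤ y ^ (h * g) * y ^ β * (1 / 2) ^ 4 := by
        gcongr _ * ?_
        exact pow_le_pow_of_le_one (by norm_num) (by norm_num) hhg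
    _ = y ^ (h * g) * (y ^ β / 16) := by ring

theorem mem_Ioc_of_mul_eq {h g : ℕ} (hh : 2 ≤ h) (hg : 2 ≤ g) {β : ℝ}
    (hβ : β * (h * g - 1) = (h - 1) * (g - 1)) : β ∈ Set.Ioc 0 1 := by
  have hhR : (2 : ℝ) ≤ h := by exact_mod_cast hh
  have hgR : (2 : ℝ) ≤ g := by exact_mod_cast hg
  have hd : 0 < (h : ℝ) * g - 1 := by nlinarith
  rw [eq_div_of_mul_eq hd.ne' hβ]
  exact ⟨div_pos (by nlinarith) hd, (div_le_one hd).2 (by nlinarith)⟩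

theorem exists_isWeakChSet_rpow_le_card {h g : ℕ} (hh : 2 ≤ h) (hg : 2 ≤ g) {β : ℝ}
    (hβ : β * (h * g - 1) = (h - 1) * (g - 1)) {n : ℕ} (hn : 4 * (h * g) ≤ (n : ℝ) ^ β) :
    ∃ A : Finset ℤ, (A : Set ℤ) ⊆ Set.Icc 1 (n : ℤ) ∧ IsWeakChSet h g (A : Set ℤ) ∧
      (1 / 8 : ℝ) * (n : ℝ) ^ β ≤ #A := by
  obtain ⟨hβ0, hβ1⟩ := mem_Ioc_of_mul_eq hh hg hβ
  have hhg : 4 ≤ h * g := Nat.mul_le_mul hh hg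
  set x := (n : ℝ) ^ β
  have hx : 16 ≤ x := by
    have : (4 : ℝ) ≤ h * g := by exact_mod_cast hhg
    linarith
  have hn : (1 : ℝ) ≤ n := by
    rcases Nat.eq_zero_or_pos n with rfl | hn
    · norm_num [x, Real.zero_rpow hβ0.ne'] at hx
    · exact_mod_cast hn
  have hxn : x ≤ n := by simpa using Real.rpow_le_rpow_of_exponent_le hn hβ1
  obtain ⟨m, hm4, hm2⟩ : ∃ m : ℕ, x / 4 ≤ m ∧ (m : ℝ) ≤ x / 2 :=
    ⟨⌈x / 4⌉₊, Nat.le_ceil _,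
      by linarith [Nat.ceil_lt_add_one (by positivity : 0 ≤ x / 4)]⟩
  have hm : h * g ≤ m := by exact_mod_cast (by push_cast; linarith : ((h * g : ℕ) : ℝ) ≤ m)
  have hmn : m ≤ n := by exact_mod_cast (by linarith : (m : ℝ) ≤ n)
  obtain ⟨A, hAn, hAweak, hAcard⟩ :=
    exists_isWeakChSet_card_mul_pow_ge (by omega) (by omega) hm hmn
  refine ⟨A, hAn, hAweak, ?_⟩
  have hpow := pow_add_sub_one_mul_pow_le (by omega) hhg (by positivity) hβ m.cast_nonneg hm2
  have hAcardR : (m : ℝ) * (n : ℝ) ^ (h * g)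
      ≤ #A * (n : ℝ) ^ (h * g) + (n : ℝ) ^ (h + g - 1) * (m : ℝ) ^ (h * g) := by
    exact_mod_cast hAcard
  have hmA : (m : ℝ) ≤ #A + x / 16 := by
    refine le_of_mul_le_mul_right ?_ (by positivity : (0 : ℝ) < (n : ℝ) ^ (h * g))
    linarith
  linarith

theorem stmt10 (g h : ℕ) (hh : 2 ≤ h) (hgh : h ≤ g) :
    ∃ N : ℕ, ∀ n : ℕ, N ≤ n → ∃ A : Finset ℤ,
      (A : Set ℤ) ⊆ Set.Icc 1 (n : ℤ) ∧ IsWeakChSet h g (A : Set ℤ) ∧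
      (1 / 8 : ℝ) * (n : ℝ) ^
          ((1 - (1 : ℝ) / h) * (1 - (1 : ℝ) / g) * (1 + 1 / ((h : ℝ) * g - 1)))
        ≤ (A.card : ℝ) := by
  have hg : 2 ≤ g := hh.trans hgh
  have hhR : (2 : ℝ) ≤ h := by exact_mod_cast hh
  have hgR : (2 : ℝ) ≤ g := by exact_mod_cast hg
  set β := (1 - (1 : ℝ) / h) * (1 - (1 : ℝ) / g) * (1 + 1 / ((h : ℝ) * g - 1))
  have hβ : β * (h * g - 1) = (h - 1) * (g - 1) := by
    have : (h : ℝ) * g - 1 ≠ 0 := by nlinarith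
    simp only [β]
    field_simp
    ring
  have hβ_tendsto : Filter.Tendsto (fun n : ℕ => (n : ℝ) ^ β) Filter.atTop Filter.atTop :=
    (tendsto_rpow_atTop (mem_Ioc_of_mul_eq hh hg hβ).1).comp tendsto_natCast_atTop_atTop
  obtain ⟨N, hN⟩ :=
    Filter.eventually_atTop.1 (hβ_tendsto.eventually_ge_atTop (4 * ((h : ℝ) * g)))
  exact ⟨N, fun n hn => exists_isWeakChSet_rpow_le_card hh hg hβ (hN n hn)⟩
end

section
/- Let g ≥ h ≥ 2 be integers. There is a constant C = C(g,h) > 0 such that for every infinite C_h[g]-set A ⊆ ℕ (with the C_h[g] condition taken in ℤ), liminf_{n → ∞} A(n)·(log n)^{1/h} / n^{1 - 1/h} ≤ C, where A(n) = |A ∩ {1, 2, …, n}| is the counting function of A. Equivalently, there are infinitely many n with A(n) ≤ C · n^{1 - 1/h} (log n)^{-1/h}. -/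
open Finset

theorem sum_mul_sum_range_two_pow {R : Type*} [CommSemiring R] (w x : ℕ → R) (K : ℕ) :
    ∑ i ∈ range (K + 1), w i * ∑ j ∈ range (2 ^ i), x j =
      ∑ j ∈ range (2 ^ K), x j * ∑ i ∈ Ico (Nat.clog 2 (j + 1)) (K + 1), w i := by
  simp only [mul_sum]
  refine (sum_comm' fun i j => ?_).trans
    (sum_congr rfl fun j _ => sum_congr rfl fun i _ => mul_comm _ _)
  simp only [mem_range, mem_Ico, Nat.clog_le_iff_le_pow one_lt_two]
  constructor
  · rintro ⟨hi, hj⟩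
    exact ⟨⟨hj, hi⟩, hj.trans_le (Nat.pow_le_pow_right two_pos (by omega))⟩
  · rintro ⟨⟨hj, hi⟩, -⟩
    exact ⟨hi, hj⟩

theorem two_rpow_neg_le_three_quarters {s : ℝ} (hs : 1 / 2 ≤ s) : (2 : ℝ) ^ (-s) ≤ 3 / 4 := by
  have hsq : ((2 : ℝ) ^ (-s)) ^ 2 ≤ 1 / 2 := by
    rw [← Real.rpow_mul_natCast zero_le_two, one_div, ← Real.rpow_neg_one]
    exact Real.rpow_le_rpow_of_exponent_le one_le_two (by push_cast; linarith)
  nlinarith [Real.rpow_nonneg zero_le_two (-s)]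

theorem sum_Ico_clog_rpow_neg_le {s : ℝ} (hs : 1 / 2 ≤ s) (j n : ℕ) :
    ∑ i ∈ Ico (Nat.clog 2 (j + 1)) n, ((2 : ℝ) ^ i) ^ (-s) ≤ 4 * ((j : ℝ) + 1) ^ (-s) := by
  have hr := two_rpow_neg_le_three_quarters hs
  have hr0 : 0 ≤ (2 : ℝ) ^ (-s) := by positivity
  simp_rw [← Real.rpow_pow_comm zero_le_two]
  calc _ ≤ ((2 : ℝ) ^ (-s)) ^ Nat.clog 2 (j + 1) / (1 - (2 : ℝ) ^ (-s)) :=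
        geom_sum_Ico_le_of_lt_one hr0 (by linarith)
    _ ≤ ((j : ℝ) + 1) ^ (-s) / (1 / 4) := by
        gcongr
        · rw [Real.rpow_pow_comm zero_le_two]
          refine Real.rpow_le_rpow_of_nonpos (by positivity) ?_ (by linarith)
          exact_mod_cast Nat.le_pow_clog one_lt_two (j + 1)
        · linarith
    _ = _ := by ring

theorem sum_range_two_pow_weight_rpow_le {q : ℝ} (hq0 : 0 < q) (hq : q ≤ 2) (K : ℕ) :
    ∑ j ∈ range (2 ^ K), (∑ i ∈ Ico (Nat.clog 2 (j + 1)) (K + 1), ((2 : ℝ) ^ i) ^ (-q⁻¹)) ^ q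
      ≤ 16 * (K + 1) := by
  have hs : 1 / 2 ≤ q⁻¹ := by rw [one_div]; gcongr
  have h4q : (4 : ℝ) ^ q ≤ 16 := by
    calc (4 : ℝ) ^ q ≤ 4 ^ (2 : ℝ) := Real.rpow_le_rpow_of_exponent_le (by norm_num) hq
      _ = 16 := by norm_num
  calc _ ≤ ∑ j ∈ range (2 ^ K), 16 * ((j : ℝ) + 1)⁻¹ := sum_le_sum fun j _ => ?_
    _ = 16 * harmonic (2 ^ K) := by simp [harmonic, mul_sum]
    _ ≤ 16 * (K + 1) := by
        gcongr
        refine (harmonic_le_one_add_log _).trans ?_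
        rw [Nat.cast_pow, Real.log_pow, Nat.cast_ofNat, add_comm]
        gcongr
        exact mul_le_of_le_one_right (Nat.cast_nonneg K) (Real.log_two_lt_d9.le.trans (by norm_num))
  calc _ ≤ (4 * ((j : ℝ) + 1) ^ (-q⁻¹)) ^ q :=
        Real.rpow_le_rpow (sum_nonneg fun i _ => by positivity)
          (sum_Ico_clog_rpow_neg_le hs j (K + 1)) hq0.le
    _ = 4 ^ q * ((j : ℝ) + 1)⁻¹ := by
        rw [Real.mul_rpow (by norm_num) (by positivity), ← Real.rpow_mul (by positivity),
          neg_mul, inv_mul_cancel₀ hq0.ne', Real.rpow_neg_one]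
    _ ≤ 16 * ((j : ℝ) + 1)⁻¹ := by gcongr

theorem sum_rpow_neg_mul_sum_range_two_pow_le {p q : ℝ} (hpq : p.HolderConjugate q) (hq : q ≤ 2)
    {x : ℕ → ℝ} (hx : ∀ j, 0 ≤ x j) (K : ℕ) :
    ∑ i ∈ range (K + 1), ((2 : ℝ) ^ i) ^ (-q⁻¹) * ∑ j ∈ range (2 ^ i), x j
      ≤ 16 * (∑ j ∈ range (2 ^ K), x j ^ p) ^ (1 / p) * ((K : ℝ) + 1) ^ (1 / q) := by
  have hq0 := hpq.symm.pos
  have hS : 0 ≤ (∑ j ∈ range (2 ^ K), x j ^ p) ^ (1 / p) :=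
    Real.rpow_nonneg (sum_nonneg fun j _ => Real.rpow_nonneg (hx j) _) _
  rw [sum_mul_sum_range_two_pow]
  calc _ ≤ (∑ j ∈ range (2 ^ K), x j ^ p) ^ (1 / p) * (16 * ((K : ℝ) + 1)) ^ (1 / q) := by
        refine (Real.inner_le_Lp_mul_Lq_of_nonneg _ hpq (fun j _ => hx j)
          fun j _ => sum_nonneg fun i _ => by positivity).trans ?_
        gcongr
        exact sum_range_two_pow_weight_rpow_le hq0 hq K
    _ ≤ (∑ j ∈ range (2 ^ K), x j ^ p) ^ (1 / p) * (16 * ((K : ℝ) + 1) ^ (1 / q)) := by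
        rw [Real.mul_rpow (by norm_num) (by positivity)]
        gcongr
        exact Real.rpow_le_self_of_one_le (by norm_num)
          ((div_le_one hq0).2 hpq.symm.lt.le)
    _ = _ := by ring

theorem exists_sum_range_two_pow_le {p B : ℝ} (hp : 2 ≤ p) {x : ℕ → ℝ} (hx : ∀ j, 0 ≤ x j)
    (K : ℕ) (hB : ∑ j ∈ range (2 ^ K), x j ^ p ≤ B * ((2 : ℝ) ^ K) ^ (p - 1)) :
    ∃ i ≤ K, ∑ j ∈ range (2 ^ i), x j
      ≤ 16 * B ^ (1 / p) * ((2 : ℝ) ^ (i + K)) ^ (1 - 1 / p) * ((K : ℝ) + 1) ^ (-1 / p) := by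
  set q := p.conjExponent
  have hpq : p.HolderConjugate q := .conjExponent (by linarith)
  have hq : q ≤ 2 := by
    change p / (p - 1) ≤ 2
    rw [div_le_iff₀ (by linarith)]
    linarith
  have hinv : q⁻¹ = 1 - 1 / p := by
    rw [one_div, ← hpq.inv_add_inv_eq_one]; ring
  have hB0 : 0 ≤ B := nonneg_of_mul_nonneg_left
    ((sum_nonneg fun j _ => Real.rpow_nonneg (hx j) p).trans hB) (by positivity)
  set c := 16 * B ^ (1 / p) * ((2 : ℝ) ^ K) ^ (1 - 1 / p) * ((K : ℝ) + 1) ^ (-1 / p)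
  have hsum : ∑ i ∈ range (K + 1), ((2 : ℝ) ^ i) ^ (-q⁻¹) * ∑ j ∈ range (2 ^ i), x j
      ≤ ∑ i ∈ range (K + 1), c := by
    have hB' : (B * ((2 : ℝ) ^ K) ^ (p - 1)) ^ (1 / p)
        = B ^ (1 / p) * ((2 : ℝ) ^ K) ^ (1 - 1 / p) := by
      rw [Real.mul_rpow hB0 (by positivity), ← Real.rpow_mul (by positivity)]
      congr 2
      field_simp
    have hK : ((K : ℝ) + 1) ^ (1 / q) = (K + 1) * ((K : ℝ) + 1) ^ (-1 / p) := by
      rw [one_div q, hinv, sub_eq_add_neg, Real.rpow_add (by positivity), Real.rpow_one, neg_div]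
    calc _ ≤ 16 * (∑ j ∈ range (2 ^ K), x j ^ p) ^ (1 / p) * ((K : ℝ) + 1) ^ (1 / q) :=
          sum_rpow_neg_mul_sum_range_two_pow_le hpq hq hx K
      _ ≤ 16 * (B * ((2 : ℝ) ^ K) ^ (p - 1)) ^ (1 / p) * ((K : ℝ) + 1) ^ (1 / q) := by
          gcongr
          exact sum_nonneg fun j _ => Real.rpow_nonneg (hx j) _
      _ = ∑ i ∈ range (K + 1), c := by
          rw [hB', hK, sum_const, card_range, nsmul_eq_mul]
          push_cast
          ring
  obtain ⟨i, hi, hle⟩ := exists_le_of_sum_le nonempty_range_add_one hsum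
  refine ⟨i, Nat.lt_succ_iff.1 (mem_range.1 hi), ?_⟩
  rw [Real.rpow_neg (by positivity), hinv, ← div_eq_inv_mul, div_le_iff₀ (by positivity)] at hle
  calc _ ≤ c * ((2 : ℝ) ^ i) ^ (1 - 1 / p) := hle
    _ = _ := by rw [pow_add, Real.mul_rpow (by positivity) (by positivity)]; ring

theorem rpow_neg_one_div_le_two_mul {a b p : ℝ} (ha : 0 < a) (hab : a ≤ 2 * b) (hp : 1 ≤ p) :
    b ^ (-1 / p) ≤ 2 * a ^ (-1 / p) := by
  have hp0 : 0 < p := by linarith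
  calc b ^ (-1 / p) ≤ (a / 2) ^ (-1 / p) :=
        Real.rpow_le_rpow_of_nonpos (by positivity) (by linarith)
          (div_nonpos_of_nonpos_of_nonneg (by norm_num) hp0.le)
    _ = 2 ^ (1 / p) * a ^ (-1 / p) := by
        rw [Real.div_rpow ha.le zero_le_two, div_eq_mul_inv, ← Real.rpow_neg zero_le_two,
          neg_div, neg_neg, mul_comm]
    _ ≤ 2 * a ^ (-1 / p) := by
        gcongr
        exact Real.rpow_le_self_of_one_le one_le_two (by rw [div_le_one hp0]; exact hp)

open Nat in
theorem pow_le_choose_mul_add (f h : ℕ) : f ^ h ≤ 2 ^ h * h ! * f.choose h + (2 * h) ^ h := by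
  rcases lt_or_ge f (2 * h) with hf | hf
  · exact le_add_left (Nat.pow_le_pow_left hf.le h)
  · calc f ^ h ≤ (2 * (f + 1 - h)) ^ h := Nat.pow_le_pow_left (by omega) h
      _ = 2 ^ h * (f + 1 - h) ^ h := mul_pow ..
      _ ≤ 2 ^ h * (h ! * f.choose h) := by
          rw [← Nat.descFactorial_eq_factorial_mul_choose]
          gcongr
          exact Nat.pow_sub_le_descFactorial f h
      _ ≤ _ := by rw [mul_assoc]; exact le_add_right le_rfl

theorem IsChSet.card_lt_of_forall_add_mem {Γ : Type*} [AddCommGroup Γ] {h g : ℕ} {A : Set Γ}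
    (hA : IsChSet h g A) {X T : Finset Γ} (hX : #X = h) (hT : ∀ k ∈ T, ∀ x ∈ X, x + k ∈ A) :
    #T < g := by
  by_contra! hgT
  obtain ⟨K, hKT, hK⟩ := exists_subset_card_eq hgT
  obtain ⟨k, hk, hnot⟩ := hA X hX K hK
  exact hnot (hT k (hKT hk))

namespace ChSet

noncomputable def shape (X : Finset ℕ) : Finset ℕ := X.image (· - sInf (X : Set ℕ))

lemma sInf_coe_le {X : Finset ℕ} {x : ℕ} (hx : x ∈ X) : sInf (X : Set ℕ) ≤ x :=
  Nat.sInf_le (mem_coe.2 hx)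

lemma sInf_coe_mem {X : Finset ℕ} (hX : X.Nonempty) : sInf (X : Set ℕ) ∈ X :=
  mem_coe.1 (Nat.sInf_mem (coe_nonempty.2 hX))

lemma image_shape_add (X : Finset ℕ) : (shape X).image (· + sInf (X : Set ℕ)) = X := by
  rw [shape, image_image]
  refine (image_congr fun x hx => ?_).trans image_id
  simp [Nat.sub_add_cancel (sInf_coe_le hx)]

lemma card_shape (X : Finset ℕ) : #(shape X) = #X :=
  Finset.card_image_of_injOn fun x hx y hy hxy => by
    have := sInf_coe_le hx; have := sInf_coe_le hy; omega

lemma zero_mem_shape {X : Finset ℕ} (hX : X.Nonempty) : 0 ∈ shape X :=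
  mem_image.2 ⟨_, sInf_coe_mem hX, Nat.sub_self _⟩

lemma shape_subset_range {X : Finset ℕ} {a L : ℕ} (hX : X ⊆ Ioc a (a + L)) :
    shape X ⊆ range L := by
  intro z hz
  obtain ⟨x, hx, rfl⟩ := mem_image.1 hz
  have hx' := mem_Ioc.1 (hX hx)
  have hm := mem_Ioc.1 (hX (sInf_coe_mem ⟨x, hx⟩))
  rw [mem_range]
  omega

lemma card_le_choose_of_zero_mem {𝒮 : Finset (Finset ℕ)} {h L : ℕ}
    (h𝒮 : ∀ P ∈ 𝒮, P ⊆ range L ∧ 0 ∈ P ∧ #P = h) : #𝒮 ≤ (L - 1).choose (h - 1) := by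
  have hmaps : ∀ P ∈ 𝒮, P.erase 0 ∈ (Ico 1 L).powersetCard (h - 1) := by
    intro P hP
    obtain ⟨hPL, h0, hPh⟩ := h𝒮 P hP
    refine mem_powersetCard.2 ⟨fun z hz => ?_, by rw [card_erase_of_mem h0, hPh]⟩
    have := mem_range.1 (hPL (mem_of_mem_erase hz))
    have := ne_of_mem_erase hz
    rw [mem_Ico]; omega
  have hinj : Set.InjOn (fun P : Finset ℕ => P.erase 0) 𝒮 := fun P hP Q hQ hPQ => by
    rw [← insert_erase (h𝒮 P hP).2.1, ← insert_erase (h𝒮 Q hQ).2.1]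
    exact congrArg _ hPQ
  simpa using card_le_card_of_injOn _ hmaps hinj

end ChSet

open ChSet

section

variable {h g : ℕ} {A : Set ℕ}

theorem IsChSet.card_lt_of_shape_eq (hA : IsChSet h g (((↑) : ℕ → ℤ) '' A))
    {𝒴 : Finset (Finset ℕ)} {P : Finset ℕ} (hP : #P = h)
    (h𝒴 : ∀ X ∈ 𝒴, ↑X ⊆ A ∧ shape X = P) : #𝒴 < g := by
  have hrec : ∀ X ∈ 𝒴, P.image (· + sInf (X : Set ℕ)) = X := fun X hX =>
    (h𝒴 X hX).2 ▸ image_shape_add X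
  have hinj : Set.InjOn (fun X : Finset ℕ => ((sInf (X : Set ℕ) : ℕ) : ℤ)) 𝒴 :=
    fun X hX Y hY hXY => by rw [← hrec X hX, ← hrec Y hY, Nat.cast_inj.1 hXY]
  rw [← Finset.card_image_of_injOn hinj]
  refine hA.card_lt_of_forall_add_mem (X := P.image (↑))
    (by rwa [card_image_of_injective _ Nat.cast_injective]) ?_
  simp only [mem_image]
  rintro _ ⟨X, hX𝒴, rfl⟩ _ ⟨z, hz, rfl⟩
  refine ⟨z + sInf (X : Set ℕ), (h𝒴 X hX𝒴).1 ?_, by push_cast; rfl⟩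
  simpa only [mem_coe, hrec X hX𝒴] using mem_image_of_mem (· + sInf (X : Set ℕ)) hz

theorem IsChSet.card_le_of_subset_Ioc (hA : IsChSet h g (((↑) : ℕ → ℤ) '' A)) (hh : 1 ≤ h)
    {L : ℕ} {𝒳 : Finset (Finset ℕ)}
    (h𝒳 : ∀ X ∈ 𝒳, #X = h ∧ ↑X ⊆ A ∧ ∃ a, X ⊆ Ioc a (a + L)) :
    #𝒳 ≤ (g - 1) * (L - 1).choose (h - 1) := by
  have hne : ∀ X ∈ 𝒳, X.Nonempty := fun X hX => card_pos.1 (by have := (h𝒳 X hX).1; omega)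
  calc #𝒳 ≤ (g - 1) * #(𝒳.image shape) := by
        refine card_le_mul_card_image _ _ fun P hP => ?_
        obtain ⟨X, hX, rfl⟩ := mem_image.1 hP
        have := hA.card_lt_of_shape_eq (𝒴 := {Y ∈ 𝒳 | shape Y = shape X})
          ((card_shape X).trans (h𝒳 X hX).1)
          fun Y hY => ⟨(h𝒳 Y (mem_filter.1 hY).1).2.1, (mem_filter.1 hY).2⟩
        omega
    _ ≤ (g - 1) * (L - 1).choose (h - 1) := by
        gcongr
        refine card_le_choose_of_zero_mem fun P hP => ?_
        obtain ⟨X, hX, rfl⟩ := mem_image.1 hP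
        obtain ⟨hXh, -, a, hXa⟩ := h𝒳 X hX
        exact ⟨shape_subset_range hXa, zero_mem_shape (hne X hX), (card_shape X).trans hXh⟩

section Blocks

variable (A) [DecidablePred (· ∈ A)]

def block (L j : ℕ) : Finset ℕ := {x ∈ Ioc (j * L) ((j + 1) * L) | x ∈ A}

theorem pairwiseDisjoint_block (L : ℕ) (s : Set ℕ) : s.PairwiseDisjoint (block A L) := by
  intro j _ j' _ hjj'
  refine disjoint_left.2 fun x hx hx' => ?_
  simp only [block, mem_filter, mem_Ioc] at hx hx'
  rcases Nat.lt_or_gt_of_ne hjj' with hlt | hlt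
  · have : (j + 1) * L ≤ j' * L := Nat.mul_le_mul_right L hlt
    omega
  · have : (j' + 1) * L ≤ j * L := Nat.mul_le_mul_right L hlt
    omega

theorem ncard_inter_Icc_mul (L J : ℕ) :
    (A ∩ Set.Icc 1 (J * L)).ncard = ∑ j ∈ range J, #(block A L j) := by
  rw [← card_biUnion (pairwiseDisjoint_block A L _), ← Set.ncard_coe_finset]
  congr 1
  ext x
  simp only [Set.mem_inter_iff, Set.mem_Icc, coe_biUnion, coe_range, Set.mem_Iio, block,
    coe_filter, mem_Ioc, Set.mem_iUnion, Set.mem_ofPred_eq, exists_prop]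
  constructor
  · rintro ⟨hxA, hx1, hxJ⟩
    have hL : 0 < L := Nat.pos_of_ne_zero (by rintro rfl; simp at hxJ; omega)
    refine ⟨(x - 1) / L, (Nat.div_lt_iff_lt_mul hL).2 (by omega), ⟨?_, ?_⟩, hxA⟩
    · have := Nat.div_mul_le_self (x - 1) L; omega
    · have := Nat.lt_div_mul_add (a := x - 1) hL; rw [add_one_mul]; omega
  · rintro ⟨i, hiJ, ⟨hix, hxi⟩, hxA⟩
    exact ⟨hxA, by omega, hxi.trans (Nat.mul_le_mul_right L hiJ)⟩

variable {A}

theorem IsChSet.sum_choose_card_block_le (hA : IsChSet h g (((↑) : ℕ → ℤ) '' A)) (hh : 1 ≤ h)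
    (L M : ℕ) : ∑ j ∈ range M, (#(block A L j)).choose h ≤ (g - 1) * (L - 1).choose (h - 1) := by
  have hdisj : ((range M : Set ℕ)).PairwiseDisjoint fun j => (block A L j).powersetCard h := by
    intro j hj j' hj' hjj'
    refine disjoint_left.2 fun X hX hX' => ?_
    obtain ⟨hXj, hXh⟩ := mem_powersetCard.1 hX
    obtain ⟨x, hx⟩ := card_pos.1 (hXh ▸ hh)
    exact disjoint_left.1 (pairwiseDisjoint_block A L _ hj hj' hjj') (hXj hx)
      ((mem_powersetCard.1 hX').1 hx)
  simp_rw [← card_powersetCard, ← card_biUnion hdisj]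
  refine hA.card_le_of_subset_Ioc hh fun X hX => ?_
  obtain ⟨j, -, hX⟩ := mem_biUnion.1 hX
  obtain ⟨hXj, hXh⟩ := mem_powersetCard.1 hX
  refine ⟨hXh, fun x hx => (mem_filter.1 (hXj hx)).2, j * L, fun x hx => ?_⟩
  rw [← add_one_mul]
  exact (mem_filter.1 (hXj hx)).1

end Blocks

open Nat in
theorem IsChSet.sum_card_block_pow_le [DecidablePred (· ∈ A)]
    (hA : IsChSet h g (((↑) : ℕ → ℤ) '' A)) (hh : 2 ≤ h) (L : ℕ) :
    ∑ j ∈ range L, #(block A L j) ^ h ≤ (2 ^ h * h ! * (g - 1) + (2 * h) ^ h) * L ^ (h - 1) :=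
  calc ∑ j ∈ range L, #(block A L j) ^ h
      ≤ ∑ j ∈ range L, (2 ^ h * h ! * (#(block A L j)).choose h + (2 * h) ^ h) :=
        sum_le_sum fun j _ => pow_le_choose_mul_add _ _
    _ = 2 ^ h * h ! * ∑ j ∈ range L, (#(block A L j)).choose h + (2 * h) ^ h * L := by
        rw [sum_add_distrib, ← mul_sum, sum_const, card_range, smul_eq_mul, mul_comm L]
    _ ≤ 2 ^ h * h ! * ((g - 1) * L ^ (h - 1)) + (2 * h) ^ h * L ^ (h - 1) := by
        gcongr
        · refine (hA.sum_choose_card_block_le (by omega) L L).trans ?_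
          gcongr
          exact (Nat.choose_le_pow _ _).trans (Nat.pow_le_pow_left (Nat.sub_le L 1) _)
        · exact Nat.le_self_pow (by omega) L
    _ = _ := by ring

open Nat in
theorem IsChSet.exists_ncard_inter_Icc_le (hA : IsChSet h g (((↑) : ℕ → ℤ) '' A)) (hh : 2 ≤ h)
    (K : ℕ) :
    ∃ i ≤ K, ((A ∩ Set.Icc 1 (2 ^ (i + K))).ncard : ℝ) ≤
      16 * (((2 ^ h * h ! * (g - 1) + (2 * h) ^ h : ℕ) : ℝ)) ^ (1 / (h : ℝ)) *
        ((2 : ℝ) ^ (i + K)) ^ (1 - 1 / (h : ℝ)) * ((K : ℝ) + 1) ^ (-1 / (h : ℝ)) := by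
  classical
  have hB := hA.sum_card_block_pow_le hh (2 ^ K)
  obtain ⟨i, hiK, hi⟩ := exists_sum_range_two_pow_le (p := h)
    (B := ((2 ^ h * h ! * (g - 1) + (2 * h) ^ h : ℕ) : ℝ)) (by exact_mod_cast hh)
    (x := fun j => (#(block A (2 ^ K) j) : ℝ)) (fun _ => Nat.cast_nonneg _) K (by
      have hh1 : (h : ℝ) - 1 = ((h - 1 : ℕ) : ℝ) := by rw [Nat.cast_sub (by omega), Nat.cast_one]
      simp_rw [Real.rpow_natCast, hh1, Real.rpow_natCast]
      exact_mod_cast hB)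
  refine ⟨i, hiK, ?_⟩
  rw [show 2 ^ (i + K) = 2 ^ i * 2 ^ K from pow_add .., ncard_inter_Icc_mul]
  exact_mod_cast hi

end

open Nat in
theorem stmt11_general (g h : ℕ) (hh : 2 ≤ h) :
    ∃ C : ℝ, 0 < C ∧ ∀ A : Set ℕ, A.Infinite →
      IsChSet h g ((fun a : ℕ => (a : ℤ)) '' A) →
      ∀ m : ℕ, ∃ n : ℕ, m ≤ n ∧ 2 ≤ n ∧
        ((A ∩ Set.Icc 1 n).ncard : ℝ) ≤
          C * (n : ℝ) ^ (1 - (1 : ℝ) / h) * (Real.log n) ^ (-(1 : ℝ) / h) := by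
  set E : ℝ := ((2 ^ h * h ! * (g - 1) + (2 * h) ^ h : ℕ) : ℝ)
  have hE : 0 < E := Nat.cast_pos.2 (Nat.add_pos_right _ (pow_pos (by omega : 0 < 2 * h) h))
  refine ⟨32 * E ^ (1 / (h : ℝ)), by positivity, fun A _ hA m => ?_⟩
  obtain ⟨i, hiK, hi⟩ := hA.exists_ncard_inter_Icc_le hh (m + 1)
  have hlog : Real.log (2 ^ (i + (m + 1)) : ℕ) ≤ 2 * ((m + 1 : ℕ) + 1 : ℝ) := by
    have hi' : (i : ℝ) ≤ m + 1 := by exact_mod_cast hiK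
    rw [Nat.cast_pow, Nat.cast_ofNat, Real.log_pow]
    push_cast
    nlinarith [Real.log_two_lt_d9, Real.log_pos one_lt_two]
  refine ⟨2 ^ (i + (m + 1)), ?_, ?_, hi.trans ?_⟩
  · exact (Nat.lt_two_pow_self).le.trans (Nat.pow_le_pow_right two_pos (by omega))
  · exact le_self_pow₀ one_le_two (by omega)
  · calc _ ≤ 16 * E ^ (1 / (h : ℝ)) * ((2 : ℝ) ^ (i + (m + 1))) ^ (1 - 1 / (h : ℝ)) *
          (2 * Real.log (2 ^ (i + (m + 1)) : ℕ) ^ (-1 / (h : ℝ))) := by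
          gcongr
          refine rpow_neg_one_div_le_two_mul (Real.log_pos ?_) hlog
            (by exact_mod_cast hh.trans' one_le_two)
          exact_mod_cast Nat.one_lt_two_pow (by omega)
      _ = _ := by push_cast; ring

theorem stmt11 (g h : ℕ) (hh : 2 ≤ h) (hgh : h ≤ g) :
    ∃ C : ℝ, 0 < C ∧ ∀ A : Set ℕ, A.Infinite →
      IsChSet h g ((fun a : ℕ => (a : ℤ)) '' A) →
      ∀ m : ℕ, ∃ n : ℕ, m ≤ n ∧ 2 ≤ n ∧
        ((A ∩ Set.Icc 1 n).ncard : ℝ) ≤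
          C * (n : ℝ) ^ (1 - (1 : ℝ) / h) * (Real.log n) ^ (-(1 : ℝ) / h) :=
  stmt11_general g h hh
end

section
/- Let g ≥ h ≥ 2 be integers and let A ⊆ ℕ be a C_h[g]-set in ℤ. For a positive integer N and 1 ≤ ν ≤ N, let A_ν = |A ∩ ((ν-1)N, νN]| be the number of elements of A in the interval I_ν = ((ν-1)N, νN]. Then Σ_{ν=1}^{N} C(A_ν, h) ≤ (g - 1) · C(N - 1, h - 1), where C(·,·) denotes the binomial coefficient. -/
theorem stmt12 (g h : ℕ) (hh : 2 ≤ h) (hgh : h ≤ g) (A : Set ℕ)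
    (hA : IsChSet h g ((fun a : ℕ => (a : ℤ)) '' A)) (N : ℕ) (hN : 1 ≤ N) :
    ∑ ν ∈ Finset.Icc 1 N, Nat.choose ((A ∩ Set.Ioc ((ν - 1) * N) (ν * N)).ncard) h
      ≤ (g - 1) * Nat.choose (N - 1) (h - 1) := by
  classical
  set Aν : ℕ → Finset ℕ := fun ν => (Finset.Ioc ((ν-1)*N) (ν*N)).filter (· ∈ A) with hAνdef
  have hncard : ∀ ν, (A ∩ Set.Ioc ((ν-1)*N) (ν*N)).ncard = (Aν ν).card := by
    intro ν
    rw [← Set.ncard_coe_finset]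
    congr 1
    ext x
    simp only [hAνdef, Finset.coe_filter, Finset.mem_Ioc, Set.mem_inter_iff, Set.mem_Ioc,
      Set.mem_setOf_eq]
    tauto
  have hLHS : ∑ ν ∈ Finset.Icc 1 N, Nat.choose ((A ∩ Set.Ioc ((ν-1)*N) (ν*N)).ncard) h
      = ∑ ν ∈ Finset.Icc 1 N, ((Aν ν).powersetCard h).card := by
    refine Finset.sum_congr rfl fun ν _ => ?_
    rw [hncard, Finset.card_powersetCard]
  rw [hLHS]
  -- the big union of all counted h-subsets
  set B := (Finset.Icc 1 N).biUnion (fun ν => (Aν ν).powersetCard h) with hBdef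
  have hdisj : ∀ ν ∈ Finset.Icc 1 N, ∀ μ ∈ Finset.Icc 1 N, ν ≠ μ →
      Disjoint ((Aν ν).powersetCard h) ((Aν μ).powersetCard h) := by
    intro ν hν μ hμ hne
    rw [Finset.disjoint_left]
    intro X hX hX'
    rw [Finset.mem_powersetCard] at hX hX'
    have hXne : X.Nonempty := Finset.card_pos.mp (by omega)
    obtain ⟨x, hx⟩ := hXne
    have h1 := hX.1 hx
    have h2 := hX'.1 hx
    simp only [hAνdef, Finset.mem_filter, Finset.mem_Ioc] at h1 h2
    apply hne
    by_contra hneq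
    rcases Nat.lt_or_ge ν μ with hlt | hge
    · have : ν * N ≤ (μ-1)*N := Nat.mul_le_mul_right N (by omega)
      omega
    · have : μ * N ≤ (ν-1)*N := Nat.mul_le_mul_right N (by omega)
      omega
  rw [← Finset.card_biUnion hdisj]
  -- facts about members of B
  have hBprop : ∀ X ∈ B, X.card = h ∧ (∀ x ∈ X, x ∈ A) ∧
      ∃ ν, 1 ≤ ν ∧ ∀ x ∈ X, (ν-1)*N < x ∧ x ≤ ν*N := by
    intro X hX
    simp only [hBdef, Finset.mem_biUnion, Finset.mem_Icc] at hX
    obtain ⟨ν, hν, hXν⟩ := hX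
    rw [Finset.mem_powersetCard] at hXν
    refine ⟨hXν.2, ?_, ν, hν.1, ?_⟩
    · intro x hx
      have := hXν.1 hx
      simp only [hAνdef, Finset.mem_filter] at this
      exact this.2
    · intro x hx
      have := hXν.1 hx
      simp only [hAνdef, Finset.mem_filter, Finset.mem_Ioc] at this
      exact this.1
  -- minimum
  have hmin : ∀ X : Finset ℕ, X.Nonempty → (sInf (X : Set ℕ)) ∈ X ∧ ∀ x ∈ X, sInf (X : Set ℕ) ≤ x := by
    intro X hne
    have hne' : (X : Set ℕ).Nonempty := by exact_mod_cast hne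
    exact ⟨Nat.sInf_mem hne', fun x hx => Nat.sInf_le (Finset.mem_coe.mpr hx)⟩
  -- the normalized pattern
  set f : Finset ℕ → Finset ℤ :=
    fun X => X.image (fun x : ℕ => (x : ℤ) - (sInf (X : Set ℕ) : ℕ)) with hfdef
  have hrecover : ∀ X : Finset ℕ,
      X.image (fun x : ℕ => (x : ℤ)) = (f X).image (fun z : ℤ => z + ((sInf (X : Set ℕ) : ℕ) : ℤ)) := by
    intro X
    rw [hfdef, Finset.image_image]
    apply Finset.image_congr
    intro x _
    simp
  have hBne : ∀ X ∈ B, X.Nonempty := by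
    intro X hX
    exact Finset.card_pos.mp (by have := (hBprop X hX).1; omega)
  have hzero : ∀ X ∈ B, (0 : ℤ) ∈ f X := by
    intro X hX
    have hm := (hmin X (hBne X hX)).1
    rw [hfdef]
    exact Finset.mem_image.mpr ⟨_, hm, by ring⟩
  have hfcard : ∀ X ∈ B, (f X).card = h := by
    intro X hX
    rw [hfdef, Finset.card_image_of_injOn, (hBprop X hX).1]
    intro a _ b _ hab
    have : (a : ℤ) = b := sub_left_injective hab
    exact_mod_cast this
  have himgbound : ∀ X ∈ B, ∀ z ∈ f X, 0 ≤ z ∧ z ≤ (N : ℤ) - 1 := by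
    intro X hX z hz
    obtain ⟨x, hx, hxz⟩ := Finset.mem_image.mp hz
    obtain ⟨hcard, hsubA, ν, hν1, hint⟩ := hBprop X hX
    have hmm := hmin X (hBne X hX)
    set m := sInf (X : Set ℕ) with hmdef
    have hle : m ≤ x := hmm.2 x hx
    have hmint := hint m hmm.1
    have hxint := hint x hx
    have e : ν - 1 + 1 = ν := by omega
    have hνN : ν * N = (ν-1)*N + N := by nth_rewrite 1 [← e]; ring
    have hxm : x < m + N := by
      rw [hνN] at hxint
      omega
    constructor
    · rw [← hxz]; push_cast; omega
    · rw [← hxz]; push_cast; omega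
  -- fiber bound
  have hfiber : ∀ p ∈ B.image f, (B.filter (fun X => f X = p)).card ≤ g - 1 := by
    intro p hp
    by_contra hcon
    push_neg at hcon
    set F := B.filter (fun X => f X = p) with hFdef
    have hg1 : g ≤ F.card := by omega
    have hKinj : Set.InjOn (fun X : Finset ℕ => ((sInf (X : Set ℕ) : ℕ) : ℤ)) F := by
      intro X hX Y hY heq
      simp only [Finset.coe_filter, Set.mem_setOf_eq, hFdef] at hX hY
      have hm : sInf (X : Set ℕ) = sInf (Y : Set ℕ) := Nat.cast_injective heq
      have h1 := hrecover X
      have h2 := hrecover Y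
      rw [hX.2, hm] at h1
      rw [hY.2] at h2
      have : X.image (fun x : ℕ => (x:ℤ)) = Y.image (fun x : ℕ => (x:ℤ)) := h1.trans h2.symm
      exact Finset.image_injective (fun a b hab => by exact_mod_cast hab) this
    have hKcard : (F.image (fun X : Finset ℕ => ((sInf (X : Set ℕ) : ℕ) : ℤ))).card = F.card :=
      Finset.card_image_of_injOn hKinj
    obtain ⟨K', hK'sub, hK'card⟩ :=
      Finset.exists_subset_card_eq (show g ≤ (F.image (fun X : Finset ℕ => ((sInf (X : Set ℕ) : ℕ) : ℤ))).card by omega)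
    obtain ⟨X₀, hX₀B, hX₀p⟩ := Finset.mem_image.mp hp
    have hpcard : p.card = h := by rw [← hX₀p]; exact hfcard X₀ hX₀B
    obtain ⟨k, hkK', hk⟩ := hA p hpcard K' hK'card
    apply hk
    obtain ⟨Y, hYF, hYk⟩ := Finset.mem_image.mp (hK'sub hkK')
    simp only [hFdef, Finset.mem_filter] at hYF
    intro x hxp
    rw [← hYF.2] at hxp
    obtain ⟨y, hy, hyx⟩ := Finset.mem_image.mp hxp
    refine ⟨y, (hBprop Y hYF.1).2.1 y hy, ?_⟩
    rw [← hYk, ← hyx]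
    ring
  -- image count bound
  have hzeroIn : ∀ p ∈ B.image f, (0:ℤ) ∈ p := by
    intro p hp
    obtain ⟨X, hX, rfl⟩ := Finset.mem_image.mp hp
    exact hzero X hX
  have himg : (B.image f).card ≤ Nat.choose (N - 1) (h - 1) := by
    have hmaps : ∀ p ∈ B.image f, p.erase 0 ∈ (Finset.Icc (1:ℤ) ((N:ℤ)-1)).powersetCard (h-1) := by
      intro p hp
      obtain ⟨X, hX, rfl⟩ := Finset.mem_image.mp hp
      rw [Finset.mem_powersetCard]
      constructor
      · intro z hz
        rw [Finset.mem_erase] at hz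
        have := himgbound X hX z hz.2
        rw [Finset.mem_Icc]
        constructor
        · have := hz.1; omega
        · omega
      · rw [Finset.card_erase_of_mem (hzero X hX), hfcard X hX]
    have hinj0 : Set.InjOn (fun p : Finset ℤ => p.erase 0) (B.image f) := by
      intro p hp q hq heq
      have h1 : insert (0:ℤ) (p.erase 0) = p := Finset.insert_erase (hzeroIn p hp)
      have h2 : insert (0:ℤ) (q.erase 0) = q := Finset.insert_erase (hzeroIn q hq)
      rw [← h1, ← h2]
      exact congrArg (insert 0) heq
    calc (B.image f).card ≤ ((Finset.Icc (1:ℤ) ((N:ℤ)-1)).powersetCard (h-1)).card :=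
          Finset.card_le_card_of_injOn _ hmaps hinj0
      _ = Nat.choose (N - 1) (h - 1) := by
          rw [Finset.card_powersetCard, Int.card_Icc]
          congr 1
          omega
  calc B.card ≤ (g - 1) * (B.image f).card := Finset.card_le_mul_card_image B (g-1) hfiber
    _ ≤ (g - 1) * Nat.choose (N - 1) (h - 1) := Nat.mul_le_mul_left _ himg
end

section
/- Let g ≥ h ≥ 2 be integers and let A ⊆ ℕ be a C_h[g]-set in ℤ. There is a constant C = C(g,h) > 0 such that for every positive integer N, writing A_ν = |A ∩ ((ν-1)N, νN]| for 1 ≤ ν ≤ N, one has Σ_{ν=1}^{N} A_ν^h ≤ C · N^{h-1}. -/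
open Finset

theorem IsChSet.card_lt {Γ : Type*} [AddCommGroup Γ] {h g : ℕ} {A : Set Γ}
    (hA : IsChSet h g A) {X K : Finset Γ} (hX : #X = h)
    (hK : ∀ k ∈ K, ∀ x ∈ X, x + k ∈ A) : #K < g := by
  by_contra! hg
  obtain ⟨K', hK'K, hK'⟩ := exists_subset_card_eq hg
  obtain ⟨k, hk, hkA⟩ := hA X hX K' hK'
  exact hkA (hK k (hK'K hk))

theorem card_filter_zero_mem_powersetCard_range_le (N h : ℕ) :
    #{T ∈ (range N).powersetCard h | 0 ∈ T} ≤ (N - 1).choose (h - 1) := by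
  calc _ ≤ #((Ioo 0 N).powersetCard (h - 1)) := by
        refine card_le_card_of_injOn (·.erase 0) (fun T hT => ?_) (fun T hT T' hT' hTT' => ?_)
        · simp only [coe_filter, mem_powersetCard] at hT
          simp only [mem_coe, mem_powersetCard, card_erase_of_mem hT.2, hT.1.2, and_true]
          intro y hy
          have := hT.1.1 (mem_of_mem_erase hy)
          simp only [mem_erase, mem_range, mem_Ioo] at hy this ⊢
          omega
        · simp only [coe_filter] at hT hT'
          rw [← insert_erase hT.2, ← insert_erase hT'.2]
          exact congrArg (insert 0) hTT'
    _ = (N - 1).choose (h - 1) := by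
        rw [card_powersetCard, Nat.card_Ioo, Nat.sub_zero]

def gapsToMax (S : Finset ℕ) : Finset ℕ := S.image (S.sup id - ·)

theorem image_sup_sub_gapsToMax (S : Finset ℕ) : (gapsToMax S).image (S.sup id - ·) = S := by
  rw [gapsToMax, image_image]
  conv_rhs => rw [← image_id (s := S)]
  refine image_congr fun x hx => ?_
  have : x ≤ S.sup id := le_sup (f := id) (mem_coe.1 hx)
  simp only [Function.comp_apply, id_eq]
  omega

theorem card_gapsToMax (S : Finset ℕ) : #(gapsToMax S) = #S :=
  le_antisymm card_image_le <| by
    conv_lhs => rw [← image_sup_sub_gapsToMax S]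
    exact card_image_le

theorem gapsToMax_subset_range {S : Finset ℕ} {N : ℕ} (hS : ∀ x ∈ S, ∀ y ∈ S, x < y + N) :
    gapsToMax S ⊆ range N := by
  intro d hd
  obtain ⟨x, hx, rfl⟩ := mem_image.1 hd
  have hmax : S.sup id ∈ S := by simpa using sup_mem_of_nonempty (f := id) ⟨x, hx⟩
  have := hS _ hmax x hx
  have := hS x hx x hx
  rw [mem_range]
  omega

theorem zero_mem_gapsToMax {S : Finset ℕ} (hS : S.Nonempty) : 0 ∈ gapsToMax S :=
  mem_image.2 ⟨S.sup id, by simpa using sup_mem_of_nonempty (f := id) hS, Nat.sub_self _⟩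

theorem card_le_of_isChSet_of_forall_lt_add {g h N : ℕ} {A : Set ℕ}
    (hA : IsChSet h g ((fun a : ℕ => (a : ℤ)) '' A)) (hh : 1 ≤ h) {𝒮 : Finset (Finset ℕ)}
    (h𝒮 : ∀ S ∈ 𝒮, #S = h ∧ ↑S ⊆ A ∧ ∀ x ∈ S, ∀ y ∈ S, x < y + N) :
    #𝒮 ≤ (g - 1) * (N - 1).choose (h - 1) := by
  have hfiber : ∀ D ∈ 𝒮.image gapsToMax, #{S ∈ 𝒮 | gapsToMax S = D} ≤ g - 1 := by
    intro D hD
    obtain ⟨S₀, hS₀, rfl⟩ := mem_image.1 hD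
    set 𝒯 := {S ∈ 𝒮 | gapsToMax S = gapsToMax S₀}
    -- each `S ∈ 𝒯` is the translate of `X` by `max S`
    set X := (gapsToMax S₀).image fun d : ℕ => -(d : ℤ)
    have hX : #X = h := by
      rw [card_image_of_injective _ fun a b hab => by simpa using hab, card_gapsToMax,
        (h𝒮 S₀ hS₀).1]
    have hinj : Set.InjOn (fun S : Finset ℕ => ((S.sup id : ℕ) : ℤ)) 𝒯 := by
      intro S hS T hT hST
      simp only [𝒯, coe_filter, Nat.cast_inj] at hS hT hST
      rw [← image_sup_sub_gapsToMax S, ← image_sup_sub_gapsToMax T, hS.2, hT.2, hST]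
    have htranslate : ∀ k ∈ 𝒯.image (fun S => ((S.sup id : ℕ) : ℤ)), ∀ x ∈ X,
        x + k ∈ (fun a : ℕ => (a : ℤ)) '' A := by
      intro k hk x hx
      obtain ⟨S, hS, rfl⟩ := mem_image.1 hk
      obtain ⟨d, hd, rfl⟩ := mem_image.1 hx
      rw [mem_filter] at hS
      rw [← hS.2] at hd
      obtain ⟨y, hy, rfl⟩ := mem_image.1 hd
      refine ⟨y, (h𝒮 S hS.1).2.1 hy, ?_⟩
      have hyM : y ≤ S.sup id := le_sup (f := id) hy
      push_cast [Nat.cast_sub hyM]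
      ring
    have := hA.card_lt hX htranslate
    rw [card_image_of_injOn hinj] at this
    omega
  calc #𝒮 ≤ (g - 1) * #(𝒮.image gapsToMax) := card_le_mul_card_image 𝒮 _ hfiber
    _ ≤ (g - 1) * #{T ∈ (range N).powersetCard h | 0 ∈ T} := by
        gcongr
        intro T hT
        obtain ⟨S, hS, rfl⟩ := mem_image.1 hT
        obtain ⟨hcard, -, hdiam⟩ := h𝒮 S hS
        have hne : S.Nonempty := card_pos.1 (hcard ▸ hh)
        simp only [mem_filter, mem_powersetCard, gapsToMax_subset_range hdiam, card_gapsToMax,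
          hcard, zero_mem_gapsToMax hne, and_self]
    _ ≤ (g - 1) * (N - 1).choose (h - 1) := by
        gcongr
        exact card_filter_zero_mem_powersetCard_range_le N h

theorem eq_of_mem_Ioc_pred_mul_mul {N ν μ x : ℕ} (hν : x ∈ Ioc ((ν - 1) * N) (ν * N))
    (hμ : x ∈ Ioc ((μ - 1) * N) (μ * N)) : ν = μ := by
  rw [mem_Ioc] at hν hμ
  by_contra hne
  rcases Nat.lt_or_gt_of_ne hne with hlt | hlt
  · have := Nat.mul_le_mul_right N (Nat.le_sub_one_of_lt hlt); omega
  · have := Nat.mul_le_mul_right N (Nat.le_sub_one_of_lt hlt); omega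

theorem sum_choose_card_filter_Ioc_le {g h : ℕ} {A : Set ℕ} [DecidablePred (· ∈ A)]
    (hA : IsChSet h g ((fun a : ℕ => (a : ℤ)) '' A)) (hh : 1 ≤ h) (N : ℕ) (s : Finset ℕ) :
    ∑ ν ∈ s, (#{x ∈ Ioc ((ν - 1) * N) (ν * N) | x ∈ A}).choose h
      ≤ (g - 1) * (N - 1).choose (h - 1) := by
  set B : ℕ → Finset ℕ := fun ν => {x ∈ Ioc ((ν - 1) * N) (ν * N) | x ∈ A}
  have hdisj : (s : Set ℕ).PairwiseDisjoint fun ν => (B ν).powersetCard h := by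
    intro ν _ μ _ hνμ
    refine disjoint_left.2 fun S hSν hSμ => hνμ ?_
    rw [mem_powersetCard] at hSν hSμ
    obtain ⟨x, hx⟩ := card_pos.1 (hSν.2 ▸ hh)
    exact eq_of_mem_Ioc_pred_mul_mul (mem_filter.1 (hSν.1 hx)).1 (mem_filter.1 (hSμ.1 hx)).1
  calc ∑ ν ∈ s, (#(B ν)).choose h = #(s.biUnion fun ν => (B ν).powersetCard h) := by
        rw [card_biUnion hdisj]
        simp only [card_powersetCard]
    _ ≤ (g - 1) * (N - 1).choose (h - 1) := by
        refine card_le_of_isChSet_of_forall_lt_add hA hh fun S hS => ?_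
        obtain ⟨ν, -, hS⟩ := mem_biUnion.1 hS
        rw [mem_powersetCard] at hS
        refine ⟨hS.2, fun x hx => (mem_filter.1 (hS.1 hx)).2, fun x hx y hy => ?_⟩
        have hx := mem_Ioc.1 (mem_filter.1 (hS.1 hx)).1
        have hy := mem_Ioc.1 (mem_filter.1 (hS.1 hy)).1
        have : ν * N ≤ (ν - 1) * N + N := by rcases ν with _ | ν <;> simp [Nat.succ_mul]
        omega

theorem pow_le_two_mul_pow_mul_choose_add_one (x h : ℕ) :
    x ^ h ≤ (2 * h) ^ h * (x.choose h + 1) := by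
  rcases lt_or_ge x (2 * h) with hx | hx
  · calc x ^ h ≤ (2 * h) ^ h := Nat.pow_le_pow_left hx.le h
      _ ≤ (2 * h) ^ h * (x.choose h + 1) := Nat.le_mul_of_pos_right _ (Nat.succ_pos _)
  · calc x ^ h ≤ (2 * (x + 1 - h)) ^ h := Nat.pow_le_pow_left (by omega) h
      _ = 2 ^ h * (x + 1 - h) ^ h := mul_pow ..
      _ ≤ 2 ^ h * (h.factorial * x.choose h) := by
          gcongr
          rw [← Nat.descFactorial_eq_factorial_mul_choose]
          exact Nat.pow_sub_le_descFactorial x h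
      _ ≤ 2 ^ h * (h ^ h * x.choose h) := by gcongr; exact Nat.factorial_le_pow h
      _ ≤ (2 * h) ^ h * (x.choose h + 1) := by rw [mul_pow, mul_assoc]; gcongr; omega

theorem sum_pow_card_filter_Ioc_le {g h N : ℕ} {A : Set ℕ} [DecidablePred (· ∈ A)]
    (hA : IsChSet h g ((fun a : ℕ => (a : ℤ)) '' A)) (hh : 2 ≤ h) (hg : 0 < g) :
    ∑ ν ∈ Icc 1 N, #{x ∈ Ioc ((ν - 1) * N) (ν * N) | x ∈ A} ^ h
      ≤ (2 * h) ^ h * g * N ^ (h - 1) := by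
  set B : ℕ → Finset ℕ := fun ν => {x ∈ Ioc ((ν - 1) * N) (ν * N) | x ∈ A}
  have hsum : ∑ ν ∈ Icc 1 N, (#(B ν)).choose h ≤ (g - 1) * N ^ (h - 1) := by
    refine (sum_choose_card_filter_Ioc_le hA (by omega) N (Icc 1 N)).trans ?_
    gcongr
    exact (Nat.choose_le_pow _ _).trans (Nat.pow_le_pow_left (Nat.sub_le N 1) _)
  calc ∑ ν ∈ Icc 1 N, #(B ν) ^ h ≤ ∑ ν ∈ Icc 1 N, (2 * h) ^ h * ((#(B ν)).choose h + 1) :=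
        sum_le_sum fun ν _ => pow_le_two_mul_pow_mul_choose_add_one _ h
    _ = (2 * h) ^ h * (∑ ν ∈ Icc 1 N, (#(B ν)).choose h + N) := by
        rw [← mul_sum, sum_add_distrib, sum_const, Nat.card_Icc, smul_eq_mul, mul_one,
          Nat.add_sub_cancel]
    _ ≤ (2 * h) ^ h * ((g - 1) * N ^ (h - 1) + N ^ (h - 1)) := by
        gcongr
        exact Nat.le_self_pow (by omega) N
    _ = (2 * h) ^ h * g * N ^ (h - 1) := by
        rw [← Nat.succ_mul, Nat.succ_eq_add_one, Nat.sub_add_cancel hg, mul_assoc]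

theorem Set.ncard_inter_Ioc_eq_card_filter (A : Set ℕ) [DecidablePred (· ∈ A)] (a b : ℕ) :
    (A ∩ Ioc a b).ncard = #{x ∈ Finset.Ioc a b | x ∈ A} := by
  rw [← Set.ncard_coe_finset, coe_filter, Set.inter_comm]
  congr 1
  ext x
  rw [Set.mem_ofPred_eq, Set.mem_inter_iff, Set.mem_Ioc, Finset.mem_Ioc]

theorem stmt13 (g h : ℕ) (hh : 2 ≤ h) (hgh : h ≤ g) :
    ∃ C : ℝ, 0 < C ∧ ∀ A : Set ℕ, IsChSet h g ((fun a : ℕ => (a : ℤ)) '' A) →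
      ∀ N : ℕ, 1 ≤ N →
        ∑ ν ∈ Finset.Icc 1 N, ((A ∩ Set.Ioc ((ν - 1) * N) (ν * N)).ncard : ℝ) ^ h
          ≤ C * (N : ℝ) ^ (h - 1) := by
  classical
  have hg : 0 < g := by omega
  refine ⟨((2 * h) ^ h * g : ℕ), by positivity, fun A hA N hN => ?_⟩
  simp_rw [Set.ncard_inter_Ioc_eq_card_filter]
  exact_mod_cast sum_pow_card_filter_Ioc_le hA hh hg
end

section
/- Let Γ be a finite abelian group of order n and let g ≥ h ≥ 2 be integers. If A ⊆ Γ is a C_h[g]-set, then |A| ≤ (g - h + 1)^{1/h} · n^{1 - 1/h} + h · n^{1 - 2/h} + h. -/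
open Finset

section Aux
variable {Γ : Type*} [AddCommGroup Γ] [Fintype Γ] [DecidableEq Γ]

lemma count_swap {α β : Type*} (s : Finset α) (t : Finset β) (p : β → α → Prop)
    [∀ b a, Decidable (p b a)] :
    ∑ u ∈ s, (t.filter fun x => p x u).card = ∑ x ∈ t, (s.filter fun u => p x u).card := by
  simp_rw [Finset.card_filter]
  exact Finset.sum_comm

lemma fiber_card_left (A : Finset Γ) (c : Γ) :
    (univ.filter fun u : Γ => c + u ∈ A).card = A.card := by
  apply Finset.card_bij (fun u _ => c + u)
  · intro u hu; exact (Finset.mem_filter.mp hu).2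
  · intro u₁ h₁ u₂ h₂ he; exact add_left_cancel he
  · intro b hb
    refine ⟨-c + b, ?_, by simp⟩
    simp [Finset.mem_filter, hb]

lemma fiber_card_right (A : Finset Γ) (c : Γ) :
    (univ.filter fun u : Γ => u + c ∈ A).card = A.card := by
  rw [show (univ.filter fun u : Γ => u + c ∈ A) = (univ.filter fun u : Γ => c + u ∈ A) by
    apply Finset.filter_congr; intro u _; simp [add_comm]]
  exact fiber_card_left A c

lemma sdiff_filter_card (L : Finset Γ) (q : Γ → Prop) [DecidablePred q] (hq : ∀ k ∈ L, q k) :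
    ((univ \ L).filter q).card = (univ.filter q).card - L.card := by
  have h1 : (univ \ L).filter q = (univ.filter q) \ L := by
    ext u
    simp only [Finset.mem_filter, Finset.mem_sdiff, Finset.mem_univ, true_and]
    tauto
  rw [h1, Finset.card_sdiff_of_subset]
  intro k hk
  simp [Finset.mem_filter, hq k hk]

lemma pow_sub_le_descFactorial (j : ℕ) : ∀ k : ℕ, (j - k) ^ (k + 1) ≤ j.descFactorial (k + 1)
  | 0 => by simp
  | (k + 1) => by
    rw [Nat.descFactorial_succ]
    calc (j - (k+1)) ^ (k + 1 + 1) = (j - (k+1)) * (j - (k+1)) ^ (k+1) := by ring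
    _ ≤ (j - (k+1)) * (j - k) ^ (k+1) :=
        Nat.mul_le_mul_left _ (Nat.pow_le_pow_left (by omega) _)
    _ ≤ (j - (k+1)) * j.descFactorial (k+1) :=
        Nat.mul_le_mul_left _ (pow_sub_le_descFactorial j k)

lemma cnt_le (A : Finset Γ) {hh g : ℕ} (hA : IsChSet hh g (A : Set Γ)) (T : Finset Γ)
    (hT : T.card = hh) :
    (univ.filter fun u : Γ => ∀ x ∈ T, x + u ∈ A).card ≤ g - 1 := by
  by_contra hc
  push_neg at hc
  obtain ⟨K, hKsub, hKcard⟩ := Finset.exists_subset_card_eq (s := univ.filter fun u : Γ => ∀ x ∈ T, x + u ∈ A) (n := g) (by omega)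
  obtain ⟨k, hkK, hk⟩ := hA T hT K hKcard
  exact hk fun x hx => (Finset.mem_filter.mp (hKsub hkK)).2 x hx

lemma branch_one (A : Finset Γ) {hh g : ℕ} (h2 : 2 ≤ hh) (hgh : hh ≤ g)
    (hA : IsChSet hh g (A : Set Γ)) (L : Finset Γ) (hL : L.card = hh - 2) (ha : hh ≤ A.card)
    (hm : ((Fintype.card Γ : ℝ)) ^ ((2:ℝ)/hh)
        ≤ ((univ.filter fun x : Γ => ∀ k ∈ L, k + x ∈ A).card : ℝ)) :
    (A.card : ℝ) ≤ ((g:ℝ) - hh + 1) ^ ((1:ℝ)/hh) * (Fintype.card Γ : ℝ) ^ (1 - (1:ℝ)/hh)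
      + ((hh:ℝ) - 1) * (Fintype.card Γ : ℝ) ^ (1 - (2:ℝ)/hh) + ((hh:ℝ) - 2) := by
  set N := Fintype.card Γ with hNdef
  set I : Finset Γ := univ.filter fun x : Γ => ∀ k ∈ L, k + x ∈ A with hIdef
  set m := I.card with hmdef
  set s : Finset Γ := univ \ L with hsdef
  set J : Γ → Finset Γ := fun u => I.filter fun x => x + u ∈ A with hJdef
  set y : Γ → ℕ := fun u => (J u).card - (hh - 1) with hydef
  have hup : ∀ x ∈ I, ∀ k ∈ L, x + k ∈ A := by
    intro x hx k hk
    rw [add_comm]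
    exact (Finset.mem_filter.mp hx).2 k hk
  -- F1
  have F1 : ∑ u ∈ s, (J u).card = m * (A.card - (hh - 2)) := by
    rw [hJdef]
    rw [count_swap s I (fun x u => x + u ∈ A)]
    rw [Finset.sum_congr rfl (fun x hx => ?_), Finset.sum_const, smul_eq_mul]
    rw [hsdef, sdiff_filter_card L (fun u => x + u ∈ A) (hup x hx), fiber_card_left A x, hL]
  -- F2
  have keyJ : ∀ u : Γ, (J u).card.choose hh
      = ((I.powersetCard hh).filter fun T => ∀ x ∈ T, x + u ∈ A).card := by
    intro u
    rw [← Finset.card_powersetCard hh (J u)]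
    congr 1
    ext T
    simp only [Finset.mem_filter, Finset.mem_powersetCard]
    constructor
    · rintro ⟨hTJ, hTc⟩
      exact ⟨⟨fun x hx => (Finset.mem_filter.mp (hTJ hx)).1, hTc⟩,
        fun x hx => (Finset.mem_filter.mp (hTJ hx)).2⟩
    · rintro ⟨⟨hTI, hTc⟩, hTp⟩
      exact ⟨fun x hx => Finset.mem_filter.mpr ⟨hTI hx, hTp x hx⟩, hTc⟩
  have F2 : ∑ u ∈ s, (J u).card.choose hh ≤ (g - hh + 1) * m.choose hh := by
    calc ∑ u ∈ s, (J u).card.choose hh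
        = ∑ u ∈ s, ((I.powersetCard hh).filter fun T => ∀ x ∈ T, x + u ∈ A).card := by
          exact Finset.sum_congr rfl fun u _ => keyJ u
      _ = ∑ T ∈ I.powersetCard hh, (s.filter fun u => ∀ x ∈ T, x + u ∈ A).card :=
          count_swap s (I.powersetCard hh) (fun T u => ∀ x ∈ T, x + u ∈ A)
      _ ≤ ∑ T ∈ I.powersetCard hh, (g - hh + 1) := by
          apply Finset.sum_le_sum
          intro T hT
          obtain ⟨hTI, hTc⟩ := Finset.mem_powersetCard.mp hT
          have hq : ∀ k ∈ L, ∀ x ∈ T, x + k ∈ A := fun k hk x hx => hup x (hTI hx) k hk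
          rw [hsdef, sdiff_filter_card L (fun u => ∀ x ∈ T, x + u ∈ A) hq, hL]
          have := cnt_le A hA T hTc
          omega
      _ = (I.powersetCard hh).card * (g - hh + 1) := by rw [Finset.sum_const, smul_eq_mul]
      _ = (g - hh + 1) * m.choose hh := by
          rw [Finset.card_powersetCard, Nat.mul_comm]
  -- F4
  have F4 : ∑ u ∈ s, (y u) ^ hh ≤ (g - hh + 1) * m ^ hh := by
    have step : ∀ u : Γ, (y u) ^ hh ≤ hh.factorial * (J u).card.choose hh := by
      intro u
      have e1 : hh - 1 + 1 = hh := by omega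
      have := pow_sub_le_descFactorial ((J u).card) (hh - 1)
      rw [e1] at this
      calc (y u) ^ hh ≤ (J u).card.descFactorial hh := this
        _ = hh.factorial * (J u).card.choose hh := Nat.descFactorial_eq_factorial_mul_choose _ _
    calc ∑ u ∈ s, (y u) ^ hh ≤ ∑ u ∈ s, hh.factorial * (J u).card.choose hh :=
          Finset.sum_le_sum fun u _ => step u
      _ = hh.factorial * ∑ u ∈ s, (J u).card.choose hh := by rw [Finset.mul_sum]
      _ ≤ hh.factorial * ((g - hh + 1) * m.choose hh) := Nat.mul_le_mul_left _ F2
      _ = (g - hh + 1) * (hh.factorial * m.choose hh) := by ring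
      _ = (g - hh + 1) * m.descFactorial hh := by
          rw [Nat.descFactorial_eq_factorial_mul_choose]
      _ ≤ (g - hh + 1) * m ^ hh := Nat.mul_le_mul_left _ (Nat.descFactorial_le_pow _ _)
  -- F5
  have F5 : ∑ u ∈ s, (J u).card ≤ (hh - 1) * s.card + ∑ u ∈ s, y u := by
    have : ∀ u ∈ s, (J u).card ≤ (hh - 1) + y u := by
      intro u _
      have hyu : y u = (J u).card - (hh - 1) := rfl
      omega
    calc ∑ u ∈ s, (J u).card ≤ ∑ u ∈ s, ((hh - 1) + y u) := Finset.sum_le_sum this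
      _ = (hh - 1) * s.card + ∑ u ∈ s, y u := by
          rw [Finset.sum_add_distrib, Finset.sum_const, smul_eq_mul, Nat.mul_comm]
  -- F6
  have hsub2 : hh - 2 ≤ A.card := by omega
  have hAN : A.card ≤ N := by
    rw [hNdef, ← Finset.card_univ]
    exact Finset.card_le_card (Finset.subset_univ A)
  have F6 : s.card = N - (hh - 2) := by
    rw [hsdef, Finset.card_sdiff_of_subset (Finset.subset_univ L), Finset.card_univ, hL]
  have hscard_pos : 0 < s.card := by omega
  -- Real part
  have hNpos : 0 < N := by omega
  have hν0 : (0:ℝ) < (N:ℝ) := by exact_mod_cast hNpos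
  have hhR : (0:ℝ) < (hh:ℝ) := by exact_mod_cast (by omega : 0 < hh)
  have hhne : (hh:ℝ) ≠ 0 := ne_of_gt hhR
  set Gn : ℝ := ((g - hh + 1 : ℕ) : ℝ) with hGn
  have hGn0 : (0:ℝ) ≤ Gn := Nat.cast_nonneg _
  set S : ℝ := ∑ u ∈ s, ((y u : ℝ)) with hSdef
  have hS0 : (0:ℝ) ≤ S := Finset.sum_nonneg fun u _ => Nat.cast_nonneg _
  have hμ0 : (0:ℝ) ≤ (m:ℝ) := Nat.cast_nonneg _
  -- power mean
  have hPM : S ^ hh ≤ ((N:ℝ) ^ (hh - 1 : ℕ)) * (Gn * (m:ℝ) ^ hh) := by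
    have e1 : hh - 1 + 1 = hh := by omega
    have pm := pow_sum_le_card_mul_sum_pow (s := s) (f := fun u => ((y u : ℝ)))
        (fun i _ => Nat.cast_nonneg _) (hh - 1)
    rw [e1] at pm
    have hyc : ∑ u ∈ s, ((y u : ℝ)) ^ hh ≤ Gn * (m:ℝ) ^ hh := by
      have h1 : ∑ u ∈ s, ((y u : ℝ)) ^ hh = ((∑ u ∈ s, (y u)^hh : ℕ):ℝ) := by
        push_cast; rfl
      have h2 : Gn * (m:ℝ) ^ hh = (((g - hh + 1) * m ^ hh : ℕ):ℝ) := by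
        rw [hGn]; push_cast; ring
      rw [h1, h2]; exact_mod_cast F4
    have hcard : ((s.card : ℝ)) ^ (hh-1:ℕ) ≤ (N:ℝ) ^ (hh-1:ℕ) := by
      apply pow_le_pow_left₀ (Nat.cast_nonneg _)
      exact_mod_cast (by omega : s.card ≤ N)
    calc S ^ hh ≤ ((s.card : ℝ)) ^ (hh-1:ℕ) * ∑ u ∈ s, ((y u : ℝ)) ^ hh := pm
      _ ≤ ((N:ℝ)) ^ (hh-1:ℕ) * (Gn * (m:ℝ) ^ hh) := by
          apply mul_le_mul hcard hyc (Finset.sum_nonneg fun u _ => by positivity) (by positivity)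
  -- root step
  set C1 : ℝ := Gn ^ ((1:ℝ)/hh) * (N:ℝ) ^ (1 - (1:ℝ)/hh) with hC1
  have hC10 : 0 ≤ C1 := mul_nonneg (Real.rpow_nonneg hGn0 _) (Real.rpow_nonneg (le_of_lt hν0) _)
  have hRpow : (C1 * (m:ℝ)) ^ hh = ((N:ℝ) ^ (hh - 1 : ℕ)) * (Gn * (m:ℝ) ^ hh) := by
    rw [hC1, mul_pow, mul_pow]
    have e1 : (Gn ^ ((1:ℝ)/hh)) ^ hh = Gn := by
      rw [← Real.rpow_natCast (Gn ^ ((1:ℝ)/hh)) hh, ← Real.rpow_mul hGn0]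
      rw [show (1:ℝ)/hh * (hh:ℝ) = 1 by field_simp]
      exact Real.rpow_one Gn
    have ecast : ((hh - 1 : ℕ) : ℝ) = (hh:ℝ) - 1 := by
      have : (1:ℕ) ≤ hh := by omega
      push_cast [this]; ring
    have e2 : ((N:ℝ) ^ (1 - (1:ℝ)/hh)) ^ hh = (N:ℝ) ^ (hh-1:ℕ) := by
      rw [← Real.rpow_natCast ((N:ℝ) ^ (1 - (1:ℝ)/hh)) hh, ← Real.rpow_mul (le_of_lt hν0)]
      rw [show (1 - (1:ℝ)/hh) * (hh:ℝ) = ((hh - 1 : ℕ) : ℝ) by rw [ecast]; field_simp]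
      exact Real.rpow_natCast (N:ℝ) (hh - 1)
    rw [e1, e2]; ring
  have hSC : S ≤ C1 * (m:ℝ) := by
    apply le_of_pow_le_pow_left₀ (by omega : hh ≠ 0) (mul_nonneg hC10 hμ0)
    rw [hRpow]; exact hPM
  -- main chain
  have hsdcard : (s.card : ℝ) ≤ (N:ℝ) := by exact_mod_cast (by omega : s.card ≤ N)
  have ehh1 : ((hh - 1 : ℕ) : ℝ) = (hh:ℝ) - 1 := by
    have : (1:ℕ) ≤ hh := by omega
    push_cast [this]; ring
  have ehh2 : ((hh - 2 : ℕ) : ℝ) = (hh:ℝ) - 2 := by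
    push_cast [h2]; ring
  have big : (m:ℝ) * ((A.card:ℝ) - ((hh:ℝ)-2)) ≤ ((hh:ℝ)-1) * (N:ℝ) + C1 * (m:ℝ) := by
    have c1 : (m:ℝ) * ((A.card:ℝ) - ((hh:ℝ)-2)) = ((m * (A.card - (hh-2)) : ℕ) : ℝ) := by
      push_cast [Nat.cast_sub hsub2, ehh2]
      ring
    rw [c1, ← F1]
    calc ((∑ u ∈ s, (J u).card : ℕ):ℝ)
        ≤ (((hh-1) * s.card + ∑ u ∈ s, y u : ℕ):ℝ) := by exact_mod_cast F5
      _ = ((hh-1:ℕ):ℝ) * (s.card:ℝ) + S := by push_cast [hSdef]; ring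
      _ ≤ ((hh:ℝ)-1) * (N:ℝ) + C1 * (m:ℝ) := by
          rw [ehh1]
          have h1 : ((hh:ℝ)-1) * (s.card:ℝ) ≤ ((hh:ℝ)-1) * (N:ℝ) := by
            apply mul_le_mul_of_nonneg_left hsdcard
            have : (2:ℝ) ≤ (hh:ℝ) := by exact_mod_cast h2
            linarith
          linarith [hSC]
  have hνμ : (N:ℝ) ≤ (m:ℝ) * (N:ℝ) ^ (1 - (2:ℝ)/hh) := by
    have hsplit : (N:ℝ) ^ ((2:ℝ)/hh) * (N:ℝ) ^ (1 - (2:ℝ)/hh) = (N:ℝ) := by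
      rw [← Real.rpow_add hν0]
      rw [show (2:ℝ)/hh + (1 - (2:ℝ)/hh) = 1 by ring]
      exact Real.rpow_one _
    calc (N:ℝ) = (N:ℝ) ^ ((2:ℝ)/hh) * (N:ℝ) ^ (1 - (2:ℝ)/hh) := hsplit.symm
      _ ≤ (m:ℝ) * (N:ℝ) ^ (1 - (2:ℝ)/hh) :=
          mul_le_mul_of_nonneg_right hm (Real.rpow_nonneg (le_of_lt hν0) _)
  have hμpos : (0:ℝ) < (m:ℝ) := lt_of_lt_of_le (Real.rpow_pos_of_pos hν0 _) hm
  have final : (A.card:ℝ) - ((hh:ℝ)-2) ≤ ((hh:ℝ)-1) * (N:ℝ) ^ (1-(2:ℝ)/hh) + C1 := by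
    have hcoef : (0:ℝ) ≤ (hh:ℝ) - 1 := by
      have : (2:ℝ) ≤ (hh:ℝ) := by exact_mod_cast h2
      linarith
    have h1 : (m:ℝ) * ((A.card:ℝ) - ((hh:ℝ)-2))
        ≤ (m:ℝ) * (((hh:ℝ)-1) * (N:ℝ) ^ (1-(2:ℝ)/hh) + C1) := by
      have h3 : ((hh:ℝ)-1) * (N:ℝ) ≤ ((hh:ℝ)-1) * ((m:ℝ) * (N:ℝ) ^ (1-(2:ℝ)/hh)) :=
        mul_le_mul_of_nonneg_left hνμ hcoef
      calc (m:ℝ) * ((A.card:ℝ) - ((hh:ℝ)-2)) ≤ ((hh:ℝ)-1) * (N:ℝ) + C1 * (m:ℝ) := big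
        _ ≤ ((hh:ℝ)-1) * ((m:ℝ) * (N:ℝ) ^ (1-(2:ℝ)/hh)) + C1 * (m:ℝ) := by linarith
        _ = (m:ℝ) * (((hh:ℝ)-1) * (N:ℝ) ^ (1-(2:ℝ)/hh) + C1) := by ring
    exact le_of_mul_le_mul_left h1 hμpos
  have hGid : Gn = (g:ℝ) - (hh:ℝ) + 1 := by
    rw [hGn]; push_cast [Nat.cast_sub hgh]; ring
  have hC1id : C1 = ((g:ℝ) - hh + 1) ^ ((1:ℝ)/hh) * (N:ℝ) ^ (1 - (1:ℝ)/hh) := by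
    rw [hC1, hGid]
  linarith [final, hC1id.symm.le, hC1id.le]

lemma branch_two (A : Finset Γ) {hh : ℕ} (h3 : 3 ≤ hh)
    (hneg : ∀ L : Finset Γ, L.card = hh - 2 →
      ((univ.filter fun x : Γ => ∀ k ∈ L, k + x ∈ A).card : ℝ)
        < (Fintype.card Γ : ℝ) ^ ((2:ℝ)/hh))
    (ha : hh ≤ A.card) :
    (A.card : ℝ) ≤ (Fintype.card Γ : ℝ) ^ (1 - (1:ℝ)/hh) + ((hh:ℝ) - 3) := by
  have hNe : Nonempty Γ := ⟨0⟩
  set N := Fintype.card Γ with hNdef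
  have hNpos : 0 < N := Fintype.card_pos
  have hν0 : (0:ℝ) < (N:ℝ) := by exact_mod_cast hNpos
  have hhR : (0:ℝ) < (hh:ℝ) := by exact_mod_cast (by omega : 0 < hh)
  have hhne : (hh:ℝ) ≠ 0 := ne_of_gt hhR
  -- the double counting identity
  have ID : ∑ L ∈ Finset.powersetCard (hh-2) (univ : Finset Γ),
      (univ.filter fun x : Γ => ∀ k ∈ L, k + x ∈ A).card = N * A.card.choose (hh-2) := by
    rw [count_swap (Finset.powersetCard (hh-2) (univ : Finset Γ)) (univ : Finset Γ)
      (fun x L => ∀ k ∈ L, k + x ∈ A)]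
    have perx : ∀ x : Γ, ((Finset.powersetCard (hh-2) (univ : Finset Γ)).filter
        fun L => ∀ k ∈ L, k + x ∈ A).card = A.card.choose (hh-2) := by
      intro x
      have e : ((Finset.powersetCard (hh-2) (univ : Finset Γ)).filter
          fun L => ∀ k ∈ L, k + x ∈ A)
          = Finset.powersetCard (hh-2) (univ.filter fun k : Γ => k + x ∈ A) := by
        ext T
        simp only [Finset.mem_filter, Finset.mem_powersetCard]
        constructor
        · rintro ⟨⟨_, hTc⟩, hTp⟩
          exact ⟨fun k hk => Finset.mem_filter.mpr ⟨Finset.mem_univ _, hTp k hk⟩, hTc⟩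
        · rintro ⟨hTs, hTc⟩
          exact ⟨⟨Finset.subset_univ T, hTc⟩, fun k hk => (Finset.mem_filter.mp (hTs hk)).2⟩
      rw [e, Finset.card_powersetCard, fiber_card_right A x]
    rw [Finset.sum_congr rfl fun x _ => perx x, Finset.sum_const, Finset.card_univ, smul_eq_mul]
  -- real bound
  have BND : (N:ℝ) * (A.card.choose (hh-2) : ℝ)
      ≤ (N.choose (hh-2) : ℝ) * (N:ℝ) ^ ((2:ℝ)/hh) := by
    have h1 : ((∑ L ∈ Finset.powersetCard (hh-2) (univ : Finset Γ),
        (univ.filter fun x : Γ => ∀ k ∈ L, k + x ∈ A).card : ℕ) : ℝ)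
        ≤ ∑ L ∈ Finset.powersetCard (hh-2) (univ : Finset Γ), (N:ℝ) ^ ((2:ℝ)/hh) := by
      rw [Nat.cast_sum]
      apply Finset.sum_le_sum
      intro L hL
      exact le_of_lt (hneg L (Finset.mem_powersetCard.mp hL).2)
    rw [ID] at h1
    rw [Finset.sum_const, Finset.card_powersetCard, Finset.card_univ, nsmul_eq_mul] at h1
    rw [← hNdef] at h1
    calc (N:ℝ) * ((A.card.choose (hh-2):ℝ)) = ((N * A.card.choose (hh-2) : ℕ):ℝ) := by
          push_cast; ring
      _ ≤ (N.choose (hh-2) : ℝ) * (N:ℝ) ^ ((2:ℝ)/hh) := h1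
  -- peel off factorials
  set x : ℕ := A.card - (hh - 3) with hxdef
  have hx1 : x ^ (hh - 2) ≤ A.card.descFactorial (hh-2) := by
    have e1 : hh - 3 + 1 = hh - 2 := by omega
    have := pow_sub_le_descFactorial (A.card) (hh - 3)
    rw [e1] at this
    exact this
  have hx2 : N.descFactorial (hh-2) ≤ N ^ (hh-2) := Nat.descFactorial_le_pow _ _
  have key : (N:ℝ) * ((x:ℝ)) ^ (hh-2) ≤ ((N:ℝ)) ^ ((hh-2):ℕ) * (N:ℝ) ^ ((2:ℝ)/hh) := by
    have hr : (0:ℝ) ≤ (N:ℝ) ^ ((2:ℝ)/hh) := Real.rpow_nonneg (le_of_lt hν0) _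
    have c1 : ((x:ℝ)) ^ (hh-2) ≤ (((hh-2).factorial : ℝ)) * ((A.card.choose (hh-2) : ℝ)) := by
      have h' := hx1
      rw [Nat.descFactorial_eq_factorial_mul_choose] at h'
      exact_mod_cast h'
    have c2 : (((hh-2).factorial : ℝ)) * ((N.choose (hh-2) : ℝ)) ≤ ((N:ℝ)) ^ ((hh-2):ℕ) := by
      have h' : (hh-2).factorial * N.choose (hh-2) ≤ N ^ (hh-2) := by
        rw [← Nat.descFactorial_eq_factorial_mul_choose]; exact hx2
      exact_mod_cast h'
    calc (N:ℝ) * ((x:ℝ)) ^ (hh-2)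
        ≤ (N:ℝ) * ((((hh-2).factorial : ℝ)) * ((A.card.choose (hh-2) : ℝ))) :=
          mul_le_mul_of_nonneg_left c1 (le_of_lt hν0)
      _ = (((hh-2).factorial : ℝ)) * ((N:ℝ) * ((A.card.choose (hh-2) : ℝ))) := by ring
      _ ≤ (((hh-2).factorial : ℝ)) * (((N.choose (hh-2) : ℝ)) * (N:ℝ) ^ ((2:ℝ)/hh)) :=
          mul_le_mul_of_nonneg_left BND (Nat.cast_nonneg _)
      _ = ((((hh-2).factorial : ℝ)) * ((N.choose (hh-2) : ℝ))) * (N:ℝ) ^ ((2:ℝ)/hh) := by ring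
      _ ≤ ((N:ℝ)) ^ ((hh-2):ℕ) * (N:ℝ) ^ ((2:ℝ)/hh) := mul_le_mul_of_nonneg_right c2 hr
  have key2 : ((x:ℝ)) ^ (hh-2) ≤ ((N:ℝ)) ^ ((hh-3):ℕ) * (N:ℝ) ^ ((2:ℝ)/hh) := by
    have e : ((N:ℝ)) ^ ((hh-2):ℕ) = (N:ℝ) * ((N:ℝ)) ^ ((hh-3):ℕ) := by
      rw [show (hh-2) = (hh-3)+1 by omega, pow_succ]; ring
    rw [e] at key
    have h1 : (N:ℝ) * (((x:ℝ)) ^ (hh-2))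
        ≤ (N:ℝ) * (((N:ℝ)) ^ ((hh-3):ℕ) * (N:ℝ) ^ ((2:ℝ)/hh)) := by
      calc (N:ℝ) * (((x:ℝ)) ^ (hh-2)) ≤ (N:ℝ) * ((N:ℝ)) ^ ((hh-3):ℕ) * (N:ℝ) ^ ((2:ℝ)/hh) := key
        _ = (N:ℝ) * (((N:ℝ)) ^ ((hh-3):ℕ) * (N:ℝ) ^ ((2:ℝ)/hh)) := by ring
    exact le_of_mul_le_mul_left h1 hν0
  have e2 : ((hh - 2 : ℕ) : ℝ) = (hh:ℝ) - 2 := by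
    rw [Nat.cast_sub (by omega : 2 ≤ hh)]; norm_num
  have e3 : ((hh - 3 : ℕ) : ℝ) = (hh:ℝ) - 3 := by
    rw [Nat.cast_sub (by omega : 3 ≤ hh)]; norm_num
  have root : (x:ℝ) ≤ (N:ℝ) ^ (1 - (1:ℝ)/hh) := by
    apply le_of_pow_le_pow_left₀ (show hh - 2 ≠ 0 by omega) (Real.rpow_nonneg (le_of_lt hν0) _)
    have e : ((N:ℝ) ^ (1 - (1:ℝ)/hh)) ^ (hh-2) = ((N:ℝ)) ^ ((hh-3):ℕ) * (N:ℝ) ^ ((2:ℝ)/hh) := by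
      rw [← Real.rpow_natCast ((N:ℝ) ^ (1 - (1:ℝ)/hh)) (hh-2), ← Real.rpow_mul (le_of_lt hν0)]
      rw [e2]
      rw [show (1 - (1:ℝ)/hh) * ((hh:ℝ) - 2) = ((hh:ℝ) - 3) + (2:ℝ)/hh by field_simp; ring]
      rw [Real.rpow_add hν0, ← e3, Real.rpow_natCast]
    rw [e]; exact key2
  have hax : A.card = x + (hh - 3) := by omega
  calc (A.card : ℝ) = (x:ℝ) + ((hh-3:ℕ):ℝ) := by rw [hax]; push_cast; ring
    _ ≤ (N:ℝ) ^ (1 - (1:ℝ)/hh) + ((hh:ℝ) - 3) := by rw [e3]; linarith [root]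

end Aux

theorem stmt15 {Γ : Type*} [AddCommGroup Γ] [Fintype Γ] (g h : ℕ) (hh : 2 ≤ h) (hgh : h ≤ g)
    (n : ℕ) (hn : n = Fintype.card Γ) (A : Finset Γ) (hA : IsChSet h g (A : Set Γ)) :
    (A.card : ℝ) ≤ ((g : ℝ) - h + 1) ^ ((1 : ℝ) / h) * (n : ℝ) ^ (1 - (1 : ℝ) / h)
      + (h : ℝ) * (n : ℝ) ^ (1 - (2 : ℝ) / h) + (h : ℝ) := by
  haveI := Classical.decEq Γ
  subst hn
  have hNe : Nonempty Γ := ⟨0⟩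
  have hgR : (h:ℝ) ≤ (g:ℝ) := by exact_mod_cast hgh
  have h2R : (2:ℝ) ≤ (h:ℝ) := by exact_mod_cast hh
  have hX1 : (0:ℝ) ≤ (Fintype.card Γ : ℝ) ^ (1 - (1:ℝ)/h) :=
    Real.rpow_nonneg (Nat.cast_nonneg _) _
  have hX2 : (0:ℝ) ≤ (Fintype.card Γ : ℝ) ^ (1 - (2:ℝ)/h) :=
    Real.rpow_nonneg (Nat.cast_nonneg _) _
  have hcoef : (1:ℝ) ≤ ((g:ℝ) - h + 1) ^ ((1:ℝ)/h) := by
    calc (1:ℝ) = (1:ℝ) ^ ((1:ℝ)/h) := (Real.one_rpow _).symm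
      _ ≤ ((g:ℝ) - h + 1) ^ ((1:ℝ)/h) :=
          Real.rpow_le_rpow (by norm_num) (by linarith) (by positivity)
  have hterm1 : (0:ℝ) ≤ ((g:ℝ) - h + 1) ^ ((1:ℝ)/h) * (Fintype.card Γ : ℝ) ^ (1 - (1:ℝ)/h) :=
    mul_nonneg (by linarith) hX1
  have hterm2 : (0:ℝ) ≤ (h:ℝ) * (Fintype.card Γ : ℝ) ^ (1 - (2:ℝ)/h) :=
    mul_nonneg (by linarith) hX2
  by_cases hsmall : A.card ≤ h
  · have : (A.card:ℝ) ≤ (h:ℝ) := by exact_mod_cast hsmall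
    linarith
  push_neg at hsmall
  have ha : h ≤ A.card := le_of_lt hsmall
  by_cases hcase : ∃ L : Finset Γ, L.card = h - 2 ∧
      ((Fintype.card Γ : ℝ)) ^ ((2:ℝ)/h)
        ≤ ((Finset.univ.filter fun x : Γ => ∀ k ∈ L, k + x ∈ A).card : ℝ)
  · obtain ⟨L, hL, hmL⟩ := hcase
    have hb := branch_one A hh hgh hA L hL ha hmL
    linarith
  · push_neg at hcase
    have h3 : 3 ≤ h := by
      by_contra hlt
      have h2eq : h = 2 := by omega
      subst h2eq
      have hc := hcase ∅ (by simp)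
      have e : (Finset.univ.filter fun x : Γ => ∀ k ∈ (∅:Finset Γ), k + x ∈ A)
          = (Finset.univ : Finset Γ) := by
        apply Finset.filter_true_of_mem
        intro x _ k hk
        exact absurd hk (Finset.notMem_empty k)
      rw [e, Finset.card_univ] at hc
      rw [show ((2:ℝ)/((2:ℕ):ℝ)) = 1 by norm_num, Real.rpow_one] at hc
      exact lt_irrefl _ hc
    have hb := branch_two A h3 hcase ha
    have hmain : (Fintype.card Γ : ℝ) ^ (1 - (1:ℝ)/h)
        ≤ ((g:ℝ) - h + 1) ^ ((1:ℝ)/h) * (Fintype.card Γ : ℝ) ^ (1 - (1:ℝ)/h) :=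
      le_mul_of_one_le_left hX1 hcoef
    linarith
end

section
/- Let p be an odd prime and let α ∈ 𝔽_p be a quadratic non-residue if p ≡ 1 (mod 4), and a nonzero quadratic residue if p ≡ 3 (mod 4). Let S(α) = { (x_1, x_2, x_3) ∈ 𝔽_p^3 : x_1² + x_2² + x_3² = α }. Then for every set X ⊆ 𝔽_p^3 with |X| = 3, there are at most two elements a ∈ 𝔽_p^3 such that the translate X + a = {x + a : x ∈ X} is contained in S(α). -/
private lemma tnz16 (p : ℕ) [Fact p.Prime] (hodd : Odd p) : (2 : ZMod p) ≠ 0 := by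
  intro h
  have h2 : ((2 : ℕ) : ZMod p) = 0 := by exact_mod_cast h
  have hdvd : p ∣ 2 := (ZMod.natCast_eq_zero_iff 2 p).mp h2
  have hp2 : p = 2 := (Nat.prime_dvd_prime_iff_eq Fact.out Nat.prime_two).mp hdvd
  rw [hp2] at hodd
  exact (by decide : ¬ Odd 2) hodd

private lemma sq_helper (p : ℕ) [Fact p.Prime] (α x y : ZMod p) (hy : y ≠ 0)
    (h : x ^ 2 = -α * y ^ 2) : IsSquare (-α) := by
  refine ⟨x * y⁻¹, ?_⟩
  field_simp
  linear_combination -h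

private lemma noline (p : ℕ) [Fact p.Prime] (hodd : Odd p) (α : ZMod p)
    (hα : if p % 4 = 1 then ¬ IsSquare α else α ≠ 0 ∧ IsSquare α)
    (v1 v2 v3 d1 d2 d3 : ZMod p)
    (hd : d1^2 + d2^2 + d3^2 = 0) (hb : v1*d1 + v2*d2 + v3*d3 = 0)
    (hv : v1^2 + v2^2 + v3^2 = α) (hne : ¬(d1 = 0 ∧ d2 = 0 ∧ d3 = 0)) : False := by
  have hsq : IsSquare (-α) := by
    by_cases h1 : d1 = 0
    · by_cases h2 : d2 = 0
      · have h3 : d3 ≠ 0 := fun h3 => hne ⟨h1, h2, h3⟩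
        exact sq_helper p α (v1*d2 - v2*d1) d3 h3 (by
          linear_combination (v1^2+v2^2)*hd - (v1*d1+v2*d2-v3*d3)*hb - d3^2*hv)
      · exact sq_helper p α (v1*d3 - v3*d1) d2 h2 (by
          linear_combination (v1^2+v3^2)*hd - (v1*d1+v3*d3-v2*d2)*hb - d2^2*hv)
    · exact sq_helper p α (v2*d3 - v3*d2) d1 h1 (by
        linear_combination (v2^2+v3^2)*hd - (v2*d2+v3*d3-v1*d1)*hb - d1^2*hv)
  have hp4 : p % 4 = 1 ∨ p % 4 = 3 := Nat.odd_mod_four_iff.mp (Nat.odd_iff.mp hodd)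
  rcases hp4 with hp4 | hp4
  · rw [if_pos hp4] at hα
    have hm1 : IsSquare (-1 : ZMod p) := ZMod.exists_sq_eq_neg_one_iff.mpr (by omega)
    exact hα (by simpa using hm1.mul hsq)
  · rw [if_neg (by omega)] at hα
    obtain ⟨hα0, r, hr⟩ := hα
    obtain ⟨s, hs⟩ := hsq
    have hr0 : r ≠ 0 := by rintro rfl; exact hα0 (by simpa using hr)
    have hm1 : IsSquare (-1 : ZMod p) := by
      refine ⟨s * r⁻¹, ?_⟩
      field_simp
      linear_combination hs + hr
    exact (ZMod.exists_sq_eq_neg_one_iff.mp hm1) (by omega)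

private lemma quadarg (p : ℕ) [Fact p.Prime] (h2 : (2 : ZMod p) ≠ 0)
    (α y1 y2 y3 u1 u2 u3 l : ZMod p) (hl0 : l ≠ 0) (hl1 : l ≠ 1)
    (e0 : y1^2 + y2^2 + y3^2 = α)
    (e1 : (y1+u1)^2 + (y2+u2)^2 + (y3+u3)^2 = α)
    (e2 : (y1+l*u1)^2 + (y2+l*u2)^2 + (y3+l*u3)^2 = α) :
    u1^2 + u2^2 + u3^2 = 0 ∧ y1*u1 + y2*u2 + y3*u3 = 0 := by
  have h3 : l * (1 - l) * (u1^2 + u2^2 + u3^2) = 0 := by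
    linear_combination l*e1 - e2 + (1-l)*e0
  have hl1' : (1 : ZMod p) - l ≠ 0 := sub_ne_zero_of_ne (Ne.symm hl1)
  have hqu : u1^2 + u2^2 + u3^2 = 0 := by
    rcases mul_eq_zero.mp h3 with h | h
    · rcases mul_eq_zero.mp h with h | h
      · exact absurd h hl0
      · exact absurd h hl1'
    · exact h
  have h4 : 2 * (y1*u1 + y2*u2 + y3*u3) = 0 := by
    linear_combination e1 - e0 - hqu
  exact ⟨hqu, (mul_eq_zero.mp h4).resolve_left h2⟩

private lemma parallel (p : ℕ) [Fact p.Prime] (w1 w2 w3 u1 u2 u3 : ZMod p)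
    (hw : ¬(w1 = 0 ∧ w2 = 0 ∧ w3 = 0))
    (h1 : u2*w3 = u3*w2) (h2 : u1*w3 = u3*w1) (h3 : u1*w2 = u2*w1) :
    ∃ s, u1 = s*w1 ∧ u2 = s*w2 ∧ u3 = s*w3 := by
  by_cases hw1 : w1 = 0
  · by_cases hw2 : w2 = 0
    · have hw3 : w3 ≠ 0 := fun h => hw ⟨hw1, hw2, h⟩
      subst hw1; subst hw2
      have hu1 : u1 = 0 := by
        have h' : u1 * w3 = 0 := by rw [h2]; ring
        exact (mul_eq_zero.mp h').resolve_right hw3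
      have hu2 : u2 = 0 := by
        have h' : u2 * w3 = 0 := by rw [h1]; ring
        exact (mul_eq_zero.mp h').resolve_right hw3
      exact ⟨u3 * w3⁻¹, by simp [hu1], by simp [hu2], by field_simp⟩
    · subst hw1
      have hu1 : u1 = 0 := by
        have h' : u1 * w2 = 0 := by rw [h3]; ring
        exact (mul_eq_zero.mp h').resolve_right hw2
      refine ⟨u2 * w2⁻¹, by simp [hu1], by field_simp, ?_⟩
      field_simp
      linear_combination -h1
  · refine ⟨u1 * w1⁻¹, by field_simp, ?_, ?_⟩
    · field_simp
      linear_combination -h3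
    · field_simp
      linear_combination -h2

theorem stmt16 (p : ℕ) [Fact p.Prime] (hodd : Odd p) (α : ZMod p)
    (hα : if p % 4 = 1 then ¬ IsSquare α else α ≠ 0 ∧ IsSquare α) :
    ∀ X : Finset (ZMod p × ZMod p × ZMod p), X.card = 3 →
      ({a : ZMod p × ZMod p × ZMod p |
          ∀ x ∈ X, x + a ∈ {y : ZMod p × ZMod p × ZMod p |
            y.1 ^ 2 + y.2.1 ^ 2 + y.2.2 ^ 2 = α}} : Set _).ncard ≤ 2 := by
  intro X hX
  by_contra hcon
  push_neg at hcon
  set S : Set (ZMod p × ZMod p × ZMod p) := {a | ∀ x ∈ X, x + a ∈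
    {y : ZMod p × ZMod p × ZMod p | y.1 ^ 2 + y.2.1 ^ 2 + y.2.2 ^ 2 = α}} with hS
  have hfin : S.Finite := by
    by_contra hf
    rw [Set.Infinite.ncard hf] at hcon
    omega
  obtain ⟨a, b, c, ha, hb, hc, hab, hac, hbc⟩ := (Set.two_lt_ncard_iff hfin).mp hcon
  obtain ⟨x, y, z, hxy, hxz, hyz, hXeq⟩ := Finset.card_eq_three.mp hX
  subst hXeq
  obtain ⟨x1, x2, x3⟩ := x
  obtain ⟨y1, y2, y3⟩ := y
  obtain ⟨z1, z2, z3⟩ := z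
  obtain ⟨a1, a2, a3⟩ := a
  obtain ⟨b1, b2, b3⟩ := b
  obtain ⟨c1, c2, c3⟩ := c
  simp only [hS, Set.mem_setOf_eq, Finset.mem_insert, Finset.mem_singleton,
    forall_eq_or_imp, forall_eq, Prod.mk_add_mk, Prod.mk.injEq, ne_eq,
    not_and] at ha hb hc hxy hxz hyz hab hac hbc
  obtain ⟨hax, hay, haz⟩ := ha
  obtain ⟨hbx, hby, hbz⟩ := hb
  obtain ⟨hcx, hcy, hcz⟩ := hc
  have h2 : (2 : ZMod p) ≠ 0 := tnz16 p hodd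
  -- orthogonality relations
  have hdu : (y1-x1)*(b1-a1) + (y2-x2)*(b2-a2) + (y3-x3)*(b3-a3) = 0 := by
    have h : 2 * ((y1-x1)*(b1-a1) + (y2-x2)*(b2-a2) + (y3-x3)*(b3-a3)) = 0 := by
      linear_combination hby - hay - hbx + hax
    exact (mul_eq_zero.mp h).resolve_left h2
  have heu : (z1-x1)*(b1-a1) + (z2-x2)*(b2-a2) + (z3-x3)*(b3-a3) = 0 := by
    have h : 2 * ((z1-x1)*(b1-a1) + (z2-x2)*(b2-a2) + (z3-x3)*(b3-a3)) = 0 := by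
      linear_combination hbz - haz - hbx + hax
    exact (mul_eq_zero.mp h).resolve_left h2
  have hdv : (y1-x1)*(c1-a1) + (y2-x2)*(c2-a2) + (y3-x3)*(c3-a3) = 0 := by
    have h : 2 * ((y1-x1)*(c1-a1) + (y2-x2)*(c2-a2) + (y3-x3)*(c3-a3)) = 0 := by
      linear_combination hcy - hay - hcx + hax
    exact (mul_eq_zero.mp h).resolve_left h2
  have hev : (z1-x1)*(c1-a1) + (z2-x2)*(c2-a2) + (z3-x3)*(c3-a3) = 0 := by
    have h : 2 * ((z1-x1)*(c1-a1) + (z2-x2)*(c2-a2) + (z3-x3)*(c3-a3)) = 0 := by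
      linear_combination hcz - haz - hcx + hax
    exact (mul_eq_zero.mp h).resolve_left h2
  by_cases hw : (y2-x2)*(z3-x3) - (y3-x3)*(z2-x2) = 0 ∧
      (y3-x3)*(z1-x1) - (y1-x1)*(z3-x3) = 0 ∧ (y1-x1)*(z2-x2) - (y2-x2)*(z1-x1) = 0
  · -- x, y, z collinear: z - x = μ (y - x)
    obtain ⟨hw1, hw2, hw3⟩ := hw
    have hdne : ¬((y1-x1) = 0 ∧ (y2-x2) = 0 ∧ (y3-x3) = 0) := by
      rintro ⟨h1', h2', h3'⟩
      exact hxy (sub_eq_zero.mp h1').symm (sub_eq_zero.mp h2').symm (sub_eq_zero.mp h3').symm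
    obtain ⟨μ, hμ1, hμ2, hμ3⟩ := parallel p (y1-x1) (y2-x2) (y3-x3)
      (z1-x1) (z2-x2) (z3-x3) hdne
      (by linear_combination -hw1) (by linear_combination hw2) (by linear_combination -hw3)
    have hμ0 : μ ≠ 0 := by
      rintro rfl
      simp only [zero_mul] at hμ1 hμ2 hμ3
      exact hxz (sub_eq_zero.mp hμ1).symm (sub_eq_zero.mp hμ2).symm (sub_eq_zero.mp hμ3).symm
    have hμone : μ ≠ 1 := by
      rintro rfl
      simp only [one_mul] at hμ1 hμ2 hμ3
      exact hyz (by linear_combination -hμ1) (by linear_combination -hμ2)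
        (by linear_combination -hμ3)
    have e1 : ((x1+a1)+(y1-x1))^2 + ((x2+a2)+(y2-x2))^2 + ((x3+a3)+(y3-x3))^2 = α := by
      linear_combination hay
    have e2 : ((x1+a1)+μ*(y1-x1))^2 + ((x2+a2)+μ*(y2-x2))^2 + ((x3+a3)+μ*(y3-x3))^2 = α := by
      linear_combination haz - (x1+z1+2*a1+μ*(y1-x1))*hμ1 - (x2+z2+2*a2+μ*(y2-x2))*hμ2
        - (x3+z3+2*a3+μ*(y3-x3))*hμ3
    obtain ⟨hqd, hBd⟩ := quadarg p h2 α (x1+a1) (x2+a2) (x3+a3)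
      (y1-x1) (y2-x2) (y3-x3) μ hμ0 hμone hax e1 e2
    exact noline p hodd α hα (x1+a1) (x2+a2) (x3+a3) (y1-x1) (y2-x2) (y3-x3)
      hqd (by linear_combination hBd) hax hdne
  · -- w = d × e ≠ 0 ; u and v are both parallel to w
    obtain ⟨s, hs1, hs2, hs3⟩ := parallel p
      ((y2-x2)*(z3-x3) - (y3-x3)*(z2-x2)) ((y3-x3)*(z1-x1) - (y1-x1)*(z3-x3))
      ((y1-x1)*(z2-x2) - (y2-x2)*(z1-x1)) (b1-a1) (b2-a2) (b3-a3) hw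
      (by linear_combination (y1-x1)*heu - (z1-x1)*hdu)
      (by linear_combination (z2-x2)*hdu - (y2-x2)*heu)
      (by linear_combination (y3-x3)*heu - (z3-x3)*hdu)
    obtain ⟨t, ht1, ht2, ht3⟩ := parallel p
      ((y2-x2)*(z3-x3) - (y3-x3)*(z2-x2)) ((y3-x3)*(z1-x1) - (y1-x1)*(z3-x3))
      ((y1-x1)*(z2-x2) - (y2-x2)*(z1-x1)) (c1-a1) (c2-a2) (c3-a3) hw
      (by linear_combination (y1-x1)*hev - (z1-x1)*hdv)
      (by linear_combination (z2-x2)*hdv - (y2-x2)*hev)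
      (by linear_combination (y3-x3)*hev - (z3-x3)*hdv)
    have hs0 : s ≠ 0 := by
      rintro rfl
      simp only [zero_mul] at hs1 hs2 hs3
      exact hab (by linear_combination -hs1) (by linear_combination -hs2)
        (by linear_combination -hs3)
    have hv1 : c1 - a1 = (t * s⁻¹) * (b1 - a1) := by
      rw [ht1, hs1]; field_simp
    have hv2 : c2 - a2 = (t * s⁻¹) * (b2 - a2) := by
      rw [ht2, hs2]; field_simp
    have hv3 : c3 - a3 = (t * s⁻¹) * (b3 - a3) := by
      rw [ht3, hs3]; field_simp
    have hlam0 : t * s⁻¹ ≠ 0 := by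
      intro h
      rw [h, zero_mul] at hv1 hv2 hv3
      exact hac (by linear_combination -hv1) (by linear_combination -hv2)
        (by linear_combination -hv3)
    have hlam1 : t * s⁻¹ ≠ 1 := by
      intro h
      rw [h, one_mul] at hv1 hv2 hv3
      exact hbc (by linear_combination -hv1) (by linear_combination -hv2)
        (by linear_combination -hv3)
    have e1 : ((x1+a1)+(b1-a1))^2 + ((x2+a2)+(b2-a2))^2 + ((x3+a3)+(b3-a3))^2 = α := by
      linear_combination hbx
    have e2 : ((x1+a1)+(t*s⁻¹)*(b1-a1))^2 + ((x2+a2)+(t*s⁻¹)*(b2-a2))^2 +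
        ((x3+a3)+(t*s⁻¹)*(b3-a3))^2 = α := by
      linear_combination hcx - (2*x1+a1+c1+(t*s⁻¹)*(b1-a1))*hv1
        - (2*x2+a2+c2+(t*s⁻¹)*(b2-a2))*hv2 - (2*x3+a3+c3+(t*s⁻¹)*(b3-a3))*hv3
    obtain ⟨hqu, hBu⟩ := quadarg p h2 α (x1+a1) (x2+a2) (x3+a3)
      (b1-a1) (b2-a2) (b3-a3) (t*s⁻¹) hlam0 hlam1 hax e1 e2
    have hune : ¬((b1-a1) = 0 ∧ (b2-a2) = 0 ∧ (b3-a3) = 0) := by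
      rintro ⟨h1', h2', h3'⟩
      exact hab (by linear_combination -h1') (by linear_combination -h2')
        (by linear_combination -h3')
    exact noline p hodd α hα (x1+a1) (x2+a2) (x3+a3) (b1-a1) (b2-a2) (b3-a3)
      hqu hBu hax hune
end

section
/- Let g ≥ h ≥ 2 be integers, let A ⊆ ℕ be an infinite C_h[g]-set in ℤ with counting function A(x) = |A ∩ {1, …, ⌊x⌋}|, and for m ≥ 2 define τ(m) := inf_{n ≥ m} A(n)(log n)^{1/h} / n^{1 - 1/h}. Then there is a constant C = C(g,h) > 0 such that for all integers N ≥ m ≥ 2, τ(m) · (N log N)^{1 - 1/h} ≤ C · Σ_{ν=1}^{N} A_ν · ν^{-(1 - 1/h)}, where A_ν = |A ∩ ((ν-1)N, νN]|. -/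
/-!
Write `α = 1 - 1/h` and `T = τ(m)`. For `1 ≤ μ ≤ N` the partial sum `A_1 + ⋯ + A_μ` is `A(μN)`,
which by definition of `T` is at least `T (μN)^α / (log μN)^{1/h} ≥ c μ^α`, where
`c = T N^α / (2 log N)^{1/h}`. Summation by parts against the weights `ν^{-α}`, whose consecutive
differences are at least `α μ^{-α} / (2μ)` by Bernoulli's inequality, bounds `∑ A_ν ν^{-α}` below by
`(cα/2) ∑_{μ ≤ N} 1/μ ≥ (cα/2) log N = α T (N log N)^α / (2 · 2^{1/h})`.
-/

open Finset Real

lemma log_natCast_le_sum_Icc_inv (N : ℕ) : log N ≤ ∑ μ ∈ Icc 1 N, (μ : ℝ)⁻¹ := by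
  simpa [harmonic_eq_sum_Icc] using log_le_harmonic_floor (N : ℝ) N.cast_nonneg

lemma mul_rpow_neg_div_le_rpow_neg_sub_rpow_neg {α x : ℝ} (hα0 : 0 ≤ α) (hα1 : α ≤ 1)
    (hx : 0 < x) : α * x ^ (-α) / (x + 1) ≤ x ^ (-α) - (x + 1) ^ (-α) := by
  have hx1 : 0 < x + 1 := by linarith
  have hbernoulli : (x / (x + 1)) ^ α ≤ 1 - α / (x + 1) := by
    have h := rpow_one_add_le_one_add_mul_self (s := -(1 / (x + 1)))
      (by rw [neg_le_neg_iff, div_le_one hx1]; linarith) hα0 hα1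
    convert h using 2 <;> field_simp <;> ring
  have hfactor : (x + 1) ^ (-α) = x ^ (-α) * (x / (x + 1)) ^ α := by
    rw [div_rpow hx.le hx1.le, rpow_neg hx.le, rpow_neg hx1.le]
    field_simp [(rpow_pos_of_pos hx α).ne']
  calc α * x ^ (-α) / (x + 1) = x ^ (-α) - x ^ (-α) * (1 - α / (x + 1)) := by ring
    _ ≤ x ^ (-α) - (x + 1) ^ (-α) := by
      rw [hfactor]
      gcongr

lemma sum_Icc_mul_sub_eq_sum_Icc_partialSum_mul_sub (a w : ℕ → ℝ) (N : ℕ) :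
    ∑ ν ∈ Icc 1 N, a ν * (w ν - w (N + 1)) =
      ∑ μ ∈ Icc 1 N, (∑ ν ∈ Icc 1 μ, a ν) * (w μ - w (μ + 1)) := by
  induction N with
  | zero => simp
  | succ N ih =>
    rw [sum_Icc_succ_top (by omega), sum_Icc_succ_top (by omega), ← ih,
      sum_Icc_succ_top (by omega), add_mul, sum_mul, ← add_assoc, ← sum_add_distrib]
    congr 1
    exact sum_congr rfl fun ν _ => by ring

lemma ncard_inter_Icc_one_mul_eq_sum (A : Set ℕ) (N μ : ℕ) :
    (A ∩ Set.Icc 1 (μ * N)).ncard =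
      ∑ ν ∈ Icc 1 μ, (A ∩ Set.Ioc ((ν - 1) * N) (ν * N)).ncard := by
  rw [show Set.Icc 1 (μ * N) = Set.Ioc 0 (μ * N) from Set.Icc_add_one_left_eq_Ioc 0 _]
  induction μ with
  | zero => simp
  | succ μ ih =>
    have hfin (a b : ℕ) : (A ∩ Set.Ioc a b).Finite := (Set.finite_Ioc a b).inter_of_right A
    rw [sum_Icc_succ_top (by omega), ← ih, Nat.add_sub_cancel,
      ← Set.Ioc_union_Ioc_eq_Ioc (Nat.zero_le _) (Nat.mul_le_mul_right N μ.le_succ),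
      Set.inter_union_distrib_left, Set.ncard_union_eq _ (hfin _ _) (hfin _ _)]
    exact (Set.Ioc_disjoint_Ioc_of_le le_rfl).mono Set.inter_subset_right Set.inter_subset_right

lemma mul_sum_Icc_inv_le_sum_Icc_mul_rpow_neg {a : ℕ → ℝ} (ha : ∀ ν, 0 ≤ a ν) {α c : ℝ}
    (hα0 : 0 ≤ α) (hα1 : α ≤ 1) {N : ℕ}
    (hpartial : ∀ μ ∈ Icc 1 N, c * (μ : ℝ) ^ α ≤ ∑ ν ∈ Icc 1 μ, a ν) :
    c * α / 2 * ∑ μ ∈ Icc 1 N, (μ : ℝ)⁻¹ ≤ ∑ ν ∈ Icc 1 N, a ν * (ν : ℝ) ^ (-α) := by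
  calc c * α / 2 * ∑ μ ∈ Icc 1 N, (μ : ℝ)⁻¹
      = ∑ μ ∈ Icc 1 N, c * (μ : ℝ) ^ α * (α * (μ : ℝ) ^ (-α) / (2 * μ)) := by
        rw [mul_sum]
        refine sum_congr rfl fun μ hμ => ?_
        have hμ0 : (0 : ℝ) < μ := by simp only [mem_Icc] at hμ; exact_mod_cast hμ.1
        rw [rpow_neg hμ0.le]
        field_simp [(rpow_pos_of_pos hμ0 α).ne']
    _ ≤ ∑ μ ∈ Icc 1 N, (∑ ν ∈ Icc 1 μ, a ν) * ((μ : ℝ) ^ (-α) - ((μ + 1 : ℕ) : ℝ) ^ (-α)) := by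
        refine sum_le_sum fun μ hμ => ?_
        have hμ1 : (1 : ℝ) ≤ μ := by simp only [mem_Icc] at hμ; exact_mod_cast hμ.1
        have hμ0 : (0 : ℝ) < μ := by linarith
        have hstep : α * (μ : ℝ) ^ (-α) / (2 * μ) ≤ (μ : ℝ) ^ (-α) - ((μ + 1 : ℕ) : ℝ) ^ (-α) := by
          push_cast
          refine le_trans ?_ (mul_rpow_neg_div_le_rpow_neg_sub_rpow_neg hα0 hα1 hμ0)
          gcongr
          linarith
        exact mul_le_mul (hpartial μ hμ) hstep (by positivity) (sum_nonneg fun ν _ => ha ν)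
    _ = ∑ ν ∈ Icc 1 N, a ν * ((ν : ℝ) ^ (-α) - ((N + 1 : ℕ) : ℝ) ^ (-α)) :=
        (sum_Icc_mul_sub_eq_sum_Icc_partialSum_mul_sub a (fun n : ℕ => (n : ℝ) ^ (-α)) N).symm
    _ ≤ ∑ ν ∈ Icc 1 N, a ν * (ν : ℝ) ^ (-α) := by
        gcongr with ν
        · exact ha ν
        · exact sub_le_self _ (rpow_nonneg (Nat.cast_nonneg _) _)

lemma mul_rpow_le_sum_ncard_inter_Ioc {A : Set ℕ} {α β T : ℝ} (hβ : 0 ≤ β) (hT : 0 ≤ T)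
    {N μ : ℕ} (hN : 2 ≤ N) (hμ : μ ∈ Icc 1 N)
    (hτ : T ≤ (A ∩ Set.Icc 1 (μ * N)).ncard * log (μ * N : ℕ) ^ β / ((μ * N : ℕ) : ℝ) ^ α) :
    T * (N : ℝ) ^ α / (2 * log N) ^ β * (μ : ℝ) ^ α ≤
      ∑ ν ∈ Icc 1 μ, ((A ∩ Set.Ioc ((ν - 1) * N) (ν * N)).ncard : ℝ) := by
  simp only [mem_Icc] at hμ
  have hμ0 : (0 : ℝ) < μ := by exact_mod_cast hμ.1
  have hμN1 : (1 : ℝ) < ((μ * N : ℕ) : ℝ) := by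
    exact_mod_cast (hN.trans (Nat.le_mul_of_pos_left N hμ.1) : 2 ≤ μ * N)
  have hlog : log ((μ * N : ℕ) : ℝ) ≤ 2 * log N := by
    rw [Nat.cast_mul, log_mul hμ0.ne' (by positivity), two_mul]
    gcongr
    exact_mod_cast hμ.2
  have hP : (0 : ℝ) < ((μ * N : ℕ) : ℝ) ^ α := rpow_pos_of_pos (by linarith) α
  have hL : (0 : ℝ) < log ((μ * N : ℕ) : ℝ) ^ β := rpow_pos_of_pos (log_pos hμN1) β
  rw [← Nat.cast_sum, ← ncard_inter_Icc_one_mul_eq_sum]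
  calc T * (N : ℝ) ^ α / (2 * log N) ^ β * (μ : ℝ) ^ α
      = T * ((μ * N : ℕ) : ℝ) ^ α / (2 * log N) ^ β := by
        rw [Nat.cast_mul, mul_rpow hμ0.le (by positivity)]
        ring
    _ ≤ T * ((μ * N : ℕ) : ℝ) ^ α / log ((μ * N : ℕ) : ℝ) ^ β := by
        gcongr
    _ ≤ (A ∩ Set.Icc 1 (μ * N)).ncard := by
        rw [div_le_iff₀ hL, ← le_div_iff₀ hP]
        exact hτ

theorem stmt18_general (g h : ℕ) (hh : 2 ≤ h) :
    ∃ C : ℝ, 0 < C ∧ ∀ A : Set ℕ, A.Infinite →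
      IsChSet h g ((fun a : ℕ => (a : ℤ)) '' A) →
      ∀ m N : ℕ, 2 ≤ m → m ≤ N →
        sInf {x : ℝ | ∃ n : ℕ, m ≤ n ∧
            x = ((A ∩ Set.Icc 1 n).ncard : ℝ) * (Real.log n) ^ ((1 : ℝ) / h)
              / (n : ℝ) ^ (1 - (1 : ℝ) / h)}
          * ((N : ℝ) * Real.log N) ^ (1 - (1 : ℝ) / h)
        ≤ C * ∑ ν ∈ Finset.Icc 1 N,
            ((A ∩ Set.Ioc ((ν - 1) * N) (ν * N)).ncard : ℝ) * (ν : ℝ) ^ (-(1 - (1 : ℝ) / h)) := by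
  have hh' : (2 : ℝ) ≤ h := by exact_mod_cast hh
  set α : ℝ := 1 - (1 : ℝ) / h with hα
  have hα0 : 0 < α := by rw [hα, sub_pos, div_lt_one (by linarith)]; linarith
  have hα1 : α ≤ 1 := by rw [hα]; linarith [show 0 < (1 : ℝ) / h by positivity]
  refine ⟨2 * 2 ^ ((1 : ℝ) / h) / α, by positivity, fun A _ _ m N hm hmN => ?_⟩
  set S := {x : ℝ | ∃ n : ℕ, m ≤ n ∧
    x = ((A ∩ Set.Icc 1 n).ncard : ℝ) * log n ^ ((1 : ℝ) / h) / (n : ℝ) ^ α}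
  have hS : ∀ x ∈ S, 0 ≤ x := by rintro _ ⟨n, -, rfl⟩; positivity
  have hT0 : 0 ≤ sInf S := Real.sInf_nonneg hS
  have hN : 2 ≤ N := hm.trans hmN
  have hlogN : 0 < log N := log_pos (by exact_mod_cast hN)
  set c := sInf S * (N : ℝ) ^ α / (2 * log N) ^ ((1 : ℝ) / h) with hc
  have hweighted := mul_sum_Icc_inv_le_sum_Icc_mul_rpow_neg (c := c)
    (fun ν => Nat.cast_nonneg _) hα0.le hα1 fun μ hμ =>
      mul_rpow_le_sum_ncard_inter_Ioc (by positivity) hT0 hN hμ <| csInf_le ⟨0, hS⟩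
        ⟨μ * N, hmN.trans (Nat.le_mul_of_pos_left N (mem_Icc.mp hμ).1), rfl⟩
  calc sInf S * (N * log N) ^ α
      = 2 * 2 ^ ((1 : ℝ) / h) / α * (c * α / 2 * log N) := by
        have hlogα : log N ^ α = log N / log N ^ ((1 : ℝ) / h) := by
          rw [hα, rpow_sub hlogN, rpow_one]
        rw [hc, mul_rpow (by positivity) hlogN.le, mul_rpow zero_le_two hlogN.le, hlogα]
        field_simp
    _ ≤ 2 * 2 ^ ((1 : ℝ) / h) / α * (c * α / 2 * ∑ μ ∈ Icc 1 N, (μ : ℝ)⁻¹) := by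
        gcongr
        exact log_natCast_le_sum_Icc_inv N
    _ ≤ _ := by gcongr

theorem stmt18 (g h : ℕ) (hh : 2 ≤ h) (hgh : h ≤ g) :
    ∃ C : ℝ, 0 < C ∧ ∀ A : Set ℕ, A.Infinite →
      IsChSet h g ((fun a : ℕ => (a : ℤ)) '' A) →
      ∀ m N : ℕ, 2 ≤ m → m ≤ N →
        sInf {x : ℝ | ∃ n : ℕ, m ≤ n ∧
            x = ((A ∩ Set.Icc 1 n).ncard : ℝ) * (Real.log n) ^ ((1 : ℝ) / h)
              / (n : ℝ) ^ (1 - (1 : ℝ) / h)}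
          * ((N : ℝ) * Real.log N) ^ (1 - (1 : ℝ) / h)
        ≤ C * ∑ ν ∈ Finset.Icc 1 N,
            ((A ∩ Set.Ioc ((ν - 1) * N) (ν * N)).ncard : ℝ) * (ν : ℝ) ^ (-(1 - (1 : ℝ) / h)) :=
  stmt18_general g h hh
end
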